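/- arXiv:1008.4214 — 6 statements merged into one kernel-verified Lean document; each statement's English description precedes it below -/
import Mathlib

section
/- Let M be a Malcev algebra over a field of characteristic not equal to 2, and let r ∈ (id−τ)(M⊗M) be a solution of the classical Yang–Baxter equation on M, i.e. C_M(r) = 0. Then the pair (M, Δ_r) is a Malcev bialgebra. -/
open TensorProduct Module

namespace MalcevPaper

variable {F : Type*} [Field F] {M : Type*} [AddCommGroup M] [Module F M]

/-- The Jacobian `J(x,y,z) = (xy)z + (yz)x + (zx)y` of a bilinear multiplication. -/
def jac (mul : M →ₗ[F] M →ₗ[F] M) (x y z : M) : M :=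
  mul (mul x y) z + mul (mul y z) x + mul (mul z x) y

/-- A bilinear multiplication is a Malcev multiplication if it is anticommutative and
satisfies `J(x,y,xz) = J(x,y,z)x`. -/
def IsMalcevMul (mul : M →ₗ[F] M →ₗ[F] M) : Prop :=
  (∀ a b : M, mul a b = - mul b a) ∧
  ∀ x y z : M, jac mul x y (mul x z) = mul (jac mul x y z) x

/-- The Jacobian for a plain (unbundled) multiplication. -/
def jacFun (mul : M → M → M) (x y z : M) : M :=
  mul (mul x y) z + mul (mul y z) x + mul (mul z x) y

/-- A plain multiplication makes `M` a Malcev algebra over `F` if it is bilinear,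
anticommutative, and satisfies the Malcev identity `J(x,y,xz) = J(x,y,z)x`. -/
def IsMalcevFun (F : Type*) [Field F] {M : Type*} [AddCommGroup M] [Module F M]
    (mul : M → M → M) : Prop :=
  (∀ a b c : M, mul (a + b) c = mul a c + mul b c) ∧
  (∀ (t : F) (a b : M), mul (t • a) b = t • mul a b) ∧
  (∀ a b c : M, mul a (b + c) = mul a b + mul a c) ∧
  (∀ (t : F) (a b : M), mul a (t • b) = t • mul a b) ∧
  (∀ a b : M, mul a b = - mul b a) ∧
  ∀ x y z : M, jacFun mul x y (mul x z) = mul (jacFun mul x y z) x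

/-- The multiplication of the dual algebra of a coalgebra `(M, Δ)`:
`⟨fg, a⟩ = Σ ⟨f, a₍₁₎⟩⟨g, a₍₂₎⟩`. -/
noncomputable def dualMul (Δ : M →ₗ[F] M ⊗[F] M) (f g : Dual F M) : Dual F M :=
  (TensorProduct.lid F F).toLinearMap ∘ₗ TensorProduct.map f g ∘ₗ Δ

/-- The action `f ⇀ a = Σ a₍₁₎ ⟨f, a₍₂₎⟩`. -/
noncomputable def rAct (Δ : M →ₗ[F] M ⊗[F] M) (f : Dual F M) (a : M) : M :=
  TensorProduct.lift (((LinearMap.lsmul F M).comp f).flip) (Δ a)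

/-- The action `a ↼ f = Σ ⟨f, a₍₁₎⟩ a₍₂₎`. -/
noncomputable def lAct (Δ : M →ₗ[F] M ⊗[F] M) (f : Dual F M) (a : M) : M :=
  TensorProduct.lift ((LinearMap.lsmul F M).comp f) (Δ a)

/-- The multiplication of the Drinfeld double `D(M) = M ⊕ M*` of an algebra `(M, mul)`
with comultiplication `Δ`:
`(a+f)(b+g) = (ab + f⇀b + a↼g) + (fg + f↽b + a⇁g)`. -/
noncomputable def doubleMul (mul : M →ₗ[F] M →ₗ[F] M) (Δ : M →ₗ[F] M ⊗[F] M) :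
    M × Dual F M → M × Dual F M → M × Dual F M :=
  fun p q =>
    (mul p.1 q.1 + rAct Δ p.2 q.1 + lAct Δ q.2 p.1,
      dualMul Δ p.2 q.2 + p.2 ∘ₗ mul q.1 + q.2 ∘ₗ mul.flip p.1)

/-- `(M, Δ)` is a Malcev bialgebra when the Drinfeld double `D(M)` is a Malcev algebra. -/
def IsMalcevBialgebra (mul : M →ₗ[F] M →ₗ[F] M) (Δ : M →ₗ[F] M ⊗[F] M) : Prop :=
  IsMalcevFun F (doubleMul mul Δ)

/-- The coboundary comultiplication `Δ_r(a) = [r,a] = Σᵢ aᵢa ⊗ bᵢ − aᵢ ⊗ abᵢ`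
for `r = Σᵢ aᵢ ⊗ bᵢ`. -/
noncomputable def coboundary (mul : M →ₗ[F] M →ₗ[F] M) (r : M ⊗[F] M) :
    M →ₗ[F] M ⊗[F] M :=
  (LinearMap.rTensorHom M ∘ₗ mul.flip).flip r - (LinearMap.lTensorHom M ∘ₗ mul).flip r

/-- On generators, `(x⊗y)⊗(u⊗v) ↦ (xu)⊗y⊗v`; used for `Σ aᵢaⱼ ⊗ bᵢ ⊗ bⱼ`. -/
noncomputable def cybT1 (mul : M →ₗ[F] M →ₗ[F] M) :
    (M ⊗[F] M) ⊗[F] (M ⊗[F] M) →ₗ[F] M ⊗[F] (M ⊗[F] M) :=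
  TensorProduct.map (TensorProduct.lift mul) LinearMap.id ∘ₗ
    (TensorProduct.tensorTensorTensorComm F M M M M).toLinearMap

/-- On generators, `(x⊗y)⊗(u⊗v) ↦ x⊗(uy)⊗v`; used for `Σ aᵢ ⊗ aⱼbᵢ ⊗ bⱼ`. -/
noncomputable def cybT2 (mul : M →ₗ[F] M →ₗ[F] M) :
    (M ⊗[F] M) ⊗[F] (M ⊗[F] M) →ₗ[F] M ⊗[F] (M ⊗[F] M) :=
  (TensorProduct.leftComm F M M M).toLinearMap ∘ₗ
    TensorProduct.map (TensorProduct.lift mul.flip) LinearMap.id ∘ₗ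
    (TensorProduct.tensorTensorTensorComm F M M M M).toLinearMap ∘ₗ
    TensorProduct.map (TensorProduct.comm F M M).toLinearMap LinearMap.id

/-- On generators, `(x⊗y)⊗(u⊗v) ↦ x⊗u⊗(yv)`; used for `Σ aᵢ ⊗ aⱼ ⊗ bᵢbⱼ`. -/
noncomputable def cybT3 (mul : M →ₗ[F] M →ₗ[F] M) :
    (M ⊗[F] M) ⊗[F] (M ⊗[F] M) →ₗ[F] M ⊗[F] (M ⊗[F] M) :=
  (TensorProduct.assoc F M M M).toLinearMap ∘ₗ
    TensorProduct.map LinearMap.id (TensorProduct.lift mul) ∘ₗ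
    (TensorProduct.tensorTensorTensorComm F M M M M).toLinearMap

/-- The classical Yang–Baxter element
`C_M(r) = Σ_{i,j} aᵢaⱼ ⊗ bᵢ ⊗ bⱼ − aᵢ ⊗ aⱼbᵢ ⊗ bⱼ + aᵢ ⊗ aⱼ ⊗ bᵢbⱼ` for `r = Σᵢ aᵢ ⊗ bᵢ`. -/
noncomputable def cyb (mul : M →ₗ[F] M →ₗ[F] M) (r : M ⊗[F] M) : M ⊗[F] (M ⊗[F] M) :=
  cybT1 mul (r ⊗ₜ[F] r) - cybT2 mul (r ⊗ₜ[F] r) + cybT3 mul (r ⊗ₜ[F] r)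

/-- Apply `f`, `g`, `h` to the three tensor factors of an element of `M ⊗ M ⊗ M`. -/
noncomputable def act3 (f g h : M →ₗ[F] M) :
    M ⊗[F] (M ⊗[F] M) →ₗ[F] M ⊗[F] (M ⊗[F] M) :=
  TensorProduct.map f (TensorProduct.map g h)

/-- A submodule is a (two-sided) ideal for a multiplication. -/
def IsIdealFun (mul : M → M → M) (I : Submodule F M) : Prop :=
  ∀ u ∈ I, ∀ a : M, mul a u ∈ I ∧ mul u a ∈ I

/-- The derived series `I ⊇ II ⊇ (II)(II) ⊇ …` of a submodule. -/
noncomputable def derivedSeries (mul : M → M → M) (I : Submodule F M) : ℕ → Submodule F M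
  | 0 => I
  | n + 1 => Submodule.span F
      (Set.image2 mul (derivedSeries mul I n : Set M) (derivedSeries mul I n : Set M))

/-- A submodule is solvable if its derived series reaches `0`. -/
def IsSolvableSub (mul : M → M → M) (I : Submodule F M) : Prop :=
  ∃ n, derivedSeries mul I n = ⊥

/-- `R` is the radical: the largest solvable ideal. -/
def IsRadicalOf (mul : M → M → M) (R : Submodule F M) : Prop :=
  IsIdealFun mul R ∧ IsSolvableSub mul R ∧
    ∀ I : Submodule F M, IsIdealFun mul I → IsSolvableSub mul I → I ≤ R

/-- `h, x, x', y, y', z, z'` is a standard basis of the 7-dimensional simple non-Lie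
Malcev algebra `(M, mul)`. -/
structure IsStdBasis (mul : M →ₗ[F] M →ₗ[F] M) (h x x' y y' z z' : M) : Prop where
  indep : LinearIndependent F ![h, x, x', y, y', z, z']
  spans : Submodule.span F (Set.range ![h, x, x', y, y', z, z']) = ⊤
  anti : ∀ u v : M, mul u v = - mul v u
  mul_h_x : mul h x = (2:F) • x
  mul_h_y : mul h y = (2:F) • y
  mul_h_z : mul h z = (2:F) • z
  mul_h_x' : mul h x' = -((2:F) • x')
  mul_h_y' : mul h y' = -((2:F) • y')
  mul_h_z' : mul h z' = -((2:F) • z')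
  mul_x_x' : mul x x' = h
  mul_y_y' : mul y y' = h
  mul_z_z' : mul z z' = h
  mul_x_y : mul x y = (2:F) • z'
  mul_y_z : mul y z = (2:F) • x'
  mul_z_x : mul z x = (2:F) • y'
  mul_x'_y' : mul x' y' = -((2:F) • z)
  mul_y'_z' : mul y' z' = -((2:F) • x)
  mul_z'_x' : mul z' x' = -((2:F) • y)
  mul_x_y' : mul x y' = 0
  mul_x_z' : mul x z' = 0
  mul_x'_y : mul x' y = 0
  mul_x'_z : mul x' z = 0
  mul_y_z' : mul y z' = 0
  mul_y'_z : mul y' z = 0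

/-- `B` and `S` are isomorphic as (sub)algebras of `(M, mul)`. -/
def SubAlgIso (mul : M →ₗ[F] M →ₗ[F] M) (B S : Submodule F M)
    (hB : ∀ a ∈ B, ∀ b ∈ B, mul a b ∈ B) : Prop :=
  ∃ e : B →ₗ[F] M, Function.Injective e ∧ LinearMap.range e = S ∧
    ∀ a b : B, e ⟨mul a b, hB a a.2 b b.2⟩ = mul (e a) (e b)




/-- `π₂ r f = Σ f(bᵢ) • aᵢ` for `r = Σ aᵢ ⊗ bᵢ`. -/
noncomputable def pi2 (r : M ⊗[F] M) (f : Dual F M) : M :=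
  TensorProduct.lift (((LinearMap.lsmul F M).comp f).flip) r

/-- `π₁ r f = Σ f(aᵢ) • bᵢ`. -/
noncomputable def pi1 (r : M ⊗[F] M) (f : Dual F M) : M :=
  TensorProduct.lift ((LinearMap.lsmul F M).comp f) r

@[simp] lemma pi2_tmul (x y : M) (f : Dual F M) : pi2 (x ⊗ₜ[F] y) f = f y • x := rfl
@[simp] lemma pi1_tmul (x y : M) (f : Dual F M) : pi1 (x ⊗ₜ[F] y) f = f x • y := rfl
@[simp] lemma pi2_zero (f : Dual F M) : pi2 (0 : M ⊗[F] M) f = 0 := by simp [pi2]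
@[simp] lemma pi2_add (r s : M ⊗[F] M) (f : Dual F M) :
    pi2 (r + s) f = pi2 r f + pi2 s f := by simp [pi2]
@[simp] lemma pi2_sub (r s : M ⊗[F] M) (f : Dual F M) :
    pi2 (r - s) f = pi2 r f - pi2 s f := by simp [pi2]
@[simp] lemma pi1_zero (f : Dual F M) : pi1 (0 : M ⊗[F] M) f = 0 := by simp [pi1]
@[simp] lemma pi1_add (r s : M ⊗[F] M) (f : Dual F M) :
    pi1 (r + s) f = pi1 r f + pi1 s f := by simp [pi1]
@[simp] lemma pi1_sub (r s : M ⊗[F] M) (f : Dual F M) :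
    pi1 (r - s) f = pi1 r f - pi1 s f := by simp [pi1]

lemma pi2_addf (r : M ⊗[F] M) (f g : Dual F M) :
    pi2 r (f + g) = pi2 r f + pi2 r g := by
  induction r using TensorProduct.induction_on with
  | zero => simp
  | tmul x y => simp [add_smul]
  | add u v hu hv => simp [hu, hv]; abel

lemma pi2_smulf (r : M ⊗[F] M) (c : F) (f : Dual F M) :
    pi2 r (c • f) = c • pi2 r f := by
  induction r using TensorProduct.induction_on with
  | zero => simp
  | tmul x y => simp [smul_smul]
  | add u v hu hv => simp [hu, hv]

lemma pi1_eq_neg_pi2 (r : M ⊗[F] M)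
    (hr : ∃ t : M ⊗[F] M, r = t - TensorProduct.comm F M M t) (f : Dual F M) :
    pi1 r f = - pi2 r f := by
  obtain ⟨t, rfl⟩ := hr
  induction t using TensorProduct.induction_on with
  | zero => simp
  | tmul x y => simp
  | add u v hu hv =>
      rw [map_add] at *
      have h1 : u + v - (TensorProduct.comm F M M u + TensorProduct.comm F M M v)
          = (u - TensorProduct.comm F M M u) + (v - TensorProduct.comm F M M v) := by abel
      rw [h1, pi1_add, pi2_add, hu, hv]; abel



section Formulas

variable (mul : M →ₗ[F] M →ₗ[F] M)

lemma coboundary_apply_tmul (x y a : M) :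
    coboundary mul (x ⊗ₜ[F] y) a = (mul x a) ⊗ₜ[F] y - x ⊗ₜ[F] (mul a y) := by
  simp [coboundary]

lemma coboundary_add' (u v : M ⊗[F] M) :
    coboundary mul (u + v) = coboundary mul u + coboundary mul v := by
  simp [coboundary]; abel

lemma rAct_coboundary (r : M ⊗[F] M) (f : Dual F M) (a : M) :
    rAct (coboundary mul r) f a = mul (pi2 r f) a - pi2 r (f ∘ₗ mul a) := by
  induction r using TensorProduct.induction_on with
  | zero => simp [rAct, coboundary]
  | tmul x y => simp [rAct, coboundary_apply_tmul]
  | add u v hu hv =>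
      rw [coboundary_add']
      simp only [rAct, LinearMap.add_apply, map_add] at *
      rw [hu, hv, pi2_add, pi2_add, map_add, LinearMap.add_apply]
      abel

lemma lAct_coboundary (r : M ⊗[F] M) (f : Dual F M) (a : M) :
    lAct (coboundary mul r) f a = pi1 r (f ∘ₗ mul.flip a) - mul a (pi1 r f) := by
  induction r using TensorProduct.induction_on with
  | zero => simp [lAct, coboundary]
  | tmul x y => simp [lAct, coboundary_apply_tmul]
  | add u v hu hv =>
      rw [coboundary_add']
      simp only [lAct, LinearMap.add_apply, map_add] at *
      rw [hu, hv, pi1_add, pi1_add, map_add]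
      abel

lemma dualMul_coboundary (r : M ⊗[F] M) (f g : Dual F M) :
    dualMul (coboundary mul r) f g = f ∘ₗ mul (pi2 r g) - g ∘ₗ mul.flip (pi1 r f) := by
  ext a
  induction r using TensorProduct.induction_on with
  | zero => simp [dualMul, coboundary]
  | tmul x y => simp [dualMul, coboundary_apply_tmul, mul_comm]
  | add u v hu hv =>
      rw [coboundary_add']
      simp only [dualMul, LinearMap.add_apply, map_add, LinearMap.coe_comp,
        Function.comp_apply, LinearEquiv.coe_coe] at *
      rw [pi2_add, pi1_add, map_add, map_add] at *
      simp only [LinearMap.add_apply, LinearMap.sub_apply, LinearMap.coe_comp,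
        Function.comp_apply] at *
      rw [hu, hv, map_add f, map_add g]; ring

end Formulas

set_option maxRecDepth 8000

section Cyb

variable (mul : M →ₗ[F] M →ₗ[F] M)

/-- Contraction `x ⊗ (y ⊗ z) ↦ (g y * h z) • x`. -/
noncomputable def psi (g h : Dual F M) : M ⊗[F] (M ⊗[F] M) →ₗ[F] M :=
  TensorProduct.lift (((LinearMap.lsmul F M).comp
    ((TensorProduct.lid F F).toLinearMap ∘ₗ TensorProduct.map g h)).flip)

@[simp] lemma psi_tmul (g h : Dual F M) (x y z : M) :
    psi g h (x ⊗ₜ[F] (y ⊗ₜ[F] z)) = (g y * h z) • x := by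
  simp [psi, mul_smul, mul_comm]


lemma cybT1_tmul (x y p q : M) :
    cybT1 mul ((x ⊗ₜ[F] y) ⊗ₜ[F] (p ⊗ₜ[F] q)) = (mul x p) ⊗ₜ[F] (y ⊗ₜ[F] q) := by
  simp [cybT1]

lemma cybT2_tmul (x y p q : M) :
    cybT2 mul ((x ⊗ₜ[F] y) ⊗ₜ[F] (p ⊗ₜ[F] q)) = x ⊗ₜ[F] ((mul p y) ⊗ₜ[F] q) := by
  simp [cybT2]

lemma cybT3_tmul (x y p q : M) :
    cybT3 mul ((x ⊗ₜ[F] y) ⊗ₜ[F] (p ⊗ₜ[F] q)) = x ⊗ₜ[F] (p ⊗ₜ[F] (mul y q)) := by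
  simp [cybT3]

lemma psi_cybT1 (g h : Dual F M) (u v : M ⊗[F] M) :
    psi g h (cybT1 mul (u ⊗ₜ[F] v)) = mul (pi2 u g) (pi2 v h) := by
  induction u using TensorProduct.induction_on with
  | zero => simp [cybT1]
  | add u₁ u₂ h₁ h₂ => simp [add_tmul, map_add, h₁, h₂]
  | tmul x y =>
      induction v using TensorProduct.induction_on with
      | zero => simp [cybT1]
      | add v₁ v₂ h₁ h₂ => simp [tmul_add, map_add, h₁, h₂]
      | tmul p q =>
          rw [cybT1_tmul, psi_tmul, pi2_tmul, pi2_tmul]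
          simp [smul_smul, mul_comm]

lemma psi_cybT2 (g h : Dual F M) (u v : M ⊗[F] M) :
    psi g h (cybT2 mul (u ⊗ₜ[F] v)) = pi2 u (g ∘ₗ mul (pi2 v h)) := by
  induction u using TensorProduct.induction_on with
  | zero => simp [cybT2]
  | add u₁ u₂ h₁ h₂ => simp [add_tmul, map_add, h₁, h₂, pi2_add]
  | tmul x y =>
      induction v using TensorProduct.induction_on with
      | zero => simp [cybT2]
      | add v₁ v₂ h₁ h₂ =>
          rw [tmul_add, map_add, map_add, h₁, h₂, pi2_add, ← pi2_addf]
          congr 1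
          ext c; simp
      | tmul p q =>
          rw [cybT2_tmul, psi_tmul]
          simp [smul_smul, mul_comm]

lemma psi_cybT3 (g h : Dual F M) (u v : M ⊗[F] M) :
    psi g h (cybT3 mul (u ⊗ₜ[F] v)) = pi2 u (h ∘ₗ mul.flip (pi1 v g)) := by
  induction u using TensorProduct.induction_on with
  | zero => simp [cybT3]
  | add u₁ u₂ h₁ h₂ => simp [add_tmul, map_add, h₁, h₂, pi2_add]
  | tmul x y =>
      induction v using TensorProduct.induction_on with
      | zero => simp [cybT3]
      | add v₁ v₂ h₁ h₂ =>
          rw [tmul_add, map_add, map_add, h₁, h₂, ← pi2_addf]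
          congr 1
          ext c; simp [pi1_add]
      | tmul p q =>
          rw [cybT3_tmul, psi_tmul]
          simp [smul_smul, mul_comm]

lemma star_identity (r : M ⊗[F] M)
    (hr : ∃ t : M ⊗[F] M, r = t - TensorProduct.comm F M M t)
    (hanti : ∀ a b : M, mul a b = - mul b a)
    (hcyb : cyb mul r = 0) (g h : Dual F M) :
    mul (pi2 r g) (pi2 r h)
      = pi2 r (g ∘ₗ mul (pi2 r h)) - pi2 r (h ∘ₗ mul (pi2 r g)) := by
  have key := congrArg (psi g h) hcyb
  rw [cyb, map_add, map_sub, psi_cybT1, psi_cybT2, psi_cybT3, map_zero] at key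
  have hflip : (h ∘ₗ mul.flip (pi1 r g)) = h ∘ₗ mul (pi2 r g) := by
    ext c
    simp only [pi1_eq_neg_pi2 r hr g, map_neg, LinearMap.neg_apply, LinearMap.comp_apply, LinearMap.flip_apply]
    rw [hanti c, map_neg, neg_neg]
  rw [hflip] at key
  linear_combination (norm := abel) key

end Cyb

section Star

variable (mul : M →ₗ[F] M →ₗ[F] M)

/-- The semidirect product `M ⋉ M*` multiplication. -/
noncomputable def starMul : M × Dual F M → M × Dual F M → M × Dual F M :=
  fun p q => (mul p.1 q.1, p.2 ∘ₗ mul q.1 - q.2 ∘ₗ mul p.1)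

variable {mul}

lemma jac_cyclic (x y z : M) : jac mul x y z = jac mul y z x := by
  simp only [jac]; abel

lemma jac_swap12 (hanti : ∀ a b : M, mul a b = - mul b a) (x y z : M) :
    jac mul x y z = - jac mul y x z := by
  have H : ∀ a b c : M, mul (mul a b) c = - mul (mul b a) c := by
    intro a b c; rw [hanti b a]; simp
  simp only [jac]
  rw [H y x z, H x z y, H z y x]
  abel

lemma jac_swap23 (hanti : ∀ a b : M, mul a b = - mul b a) (x y z : M) :
    jac mul x y z = - jac mul x z y := by
  rw [jac_cyclic x y z, jac_cyclic x z y, jac_swap12 hanti z y x, neg_neg]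

lemma jac_add1 (x w y z : M) :
    jac mul (x + w) y z = jac mul x y z + jac mul w y z := by
  simp only [jac, map_add, LinearMap.add_apply]; abel

lemma jac_add3 (x y z w : M) :
    jac mul x y (z + w) = jac mul x y z + jac mul x y w := by
  simp only [jac, map_add, LinearMap.add_apply]; abel

/-- Linearized Malcev identity. -/
lemma lin_malcev (hMal : IsMalcevMul mul) (x w y z : M) :
    jac mul x y (mul w z) + jac mul w y (mul x z)
      = mul (jac mul x y z) w + mul (jac mul w y z) x := by
  have h := hMal.2 (x + w) y z
  simp only [map_add, LinearMap.add_apply, jac_add1, jac_add3] at h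
  rw [hMal.2 x y z, hMal.2 w y z] at h
  linear_combination (norm := abel) h

lemma idH (hMal : IsMalcevMul mul) (A B v : M) :
    (mul A (mul (mul A B) v)) + (mul (mul A B) (mul A v)) + (mul B (mul A (mul A v))) = (mul A (mul A (mul B v))) := by
  have hanti := hMal.1
  have e1 := hMal.2 A B v
  simp only [jac, map_add, LinearMap.add_apply] at e1
  have fl2 : (mul A (mul A (mul B v))) = -((mul A (mul (mul B v) A))) := by
    simp only [hanti A (mul B v), map_neg, LinearMap.neg_apply, neg_neg]
  have fl3 : (mul A (mul (mul B v) A)) = -((mul (mul (mul B v) A) A)) := by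
    simp only [hanti A (mul (mul B v) A), map_neg, LinearMap.neg_apply, neg_neg]
  have fl4 : (mul B (mul A (mul A v))) = -((mul B (mul A (mul v A)))) := by
    simp only [hanti A v, map_neg, LinearMap.neg_apply, neg_neg]
  have fl5 : (mul B (mul A (mul v A))) = -((mul B (mul (mul v A) A))) := by
    simp only [hanti A (mul v A), map_neg, LinearMap.neg_apply, neg_neg]
  have fl6 : (mul B (mul (mul v A) A)) = -((mul (mul (mul v A) A) B)) := by
    simp only [hanti B (mul (mul v A) A), map_neg, LinearMap.neg_apply, neg_neg]
  have fl7 : (mul (mul (mul v A) A) B) = -((mul (mul (mul A v) A) B)) := by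
    simp only [hanti v A, map_neg, LinearMap.neg_apply, neg_neg]
  have fl8 : (mul (mul v (mul A B)) A) = -((mul (mul (mul A B) v) A)) := by
    simp only [hanti v (mul A B), map_neg, LinearMap.neg_apply, neg_neg]
  have fl9 : (mul (mul v (mul A B)) A) = -((mul (mul v (mul B A)) A)) := by
    simp only [hanti A B, map_neg, LinearMap.neg_apply, neg_neg]
  have fl10 : (mul (mul v (mul B A)) A) = -((mul A (mul v (mul B A)))) := by
    simp only [hanti (mul v (mul B A)) A, map_neg, LinearMap.neg_apply, neg_neg]
  have fl11 : (mul A (mul v (mul B A))) = -((mul A (mul (mul B A) v))) := by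
    simp only [hanti v (mul B A), map_neg, LinearMap.neg_apply, neg_neg]
  have fl12 : (mul A (mul (mul B A) v)) = -((mul A (mul (mul A B) v))) := by
    simp only [hanti B A, map_neg, LinearMap.neg_apply, neg_neg]
  have fl13 : (mul (mul (mul A v) B) A) = -((mul (mul B (mul A v)) A)) := by
    simp only [hanti (mul A v) B, map_neg, LinearMap.neg_apply, neg_neg]
  have fl14 : (mul (mul (mul A v) B) A) = -((mul (mul (mul v A) B) A)) := by
    simp only [hanti A v, map_neg, LinearMap.neg_apply, neg_neg]
  linear_combination (norm := abel) e1 - fl2 + fl3 + fl4 - fl5 + fl6 - fl7 + fl8 - fl9 + fl10 - fl11 + fl12 - fl13 + fl14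

lemma idG (hMal : IsMalcevMul mul) (A C v : M) :
    (mul (mul A C) (mul A v)) + (mul A (mul C (mul A v))) + (mul (mul C A) (mul A v)) = (mul A (mul (mul A C) v)) + (mul (mul (mul A C) A) v) + (mul C (mul A (mul A v))) := by
  have hanti := hMal.1
  have e1 := hMal.2 A C v
  simp only [jac, map_add, LinearMap.add_apply] at e1
  have e2 := hMal.2 A v C
  simp only [jac, map_add, LinearMap.add_apply] at e2
  have fl3 : (mul (mul (mul v A) C) A) = -((mul (mul (mul A v) C) A)) := by
    simp only [hanti v A, map_neg, LinearMap.neg_apply, neg_neg]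
  have fl4 : (mul (mul C (mul v A)) A) = -((mul A (mul C (mul v A)))) := by
    simp only [hanti (mul C (mul v A)) A, map_neg, LinearMap.neg_apply, neg_neg]
  have fl5 : (mul (mul C (mul v A)) A) = -((mul (mul C (mul A v)) A)) := by
    simp only [hanti v A, map_neg, LinearMap.neg_apply, neg_neg]
  have fl6 : (mul A (mul C (mul v A))) = -((mul A (mul C (mul A v)))) := by
    simp only [hanti v A, map_neg, LinearMap.neg_apply, neg_neg]
  have fl7 : (mul (mul (mul A v) A) C) = -((mul (mul (mul v A) A) C)) := by
    simp only [hanti A v, map_neg, LinearMap.neg_apply, neg_neg]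
  have fl8 : (mul (mul (mul v A) A) C) = -((mul (mul A (mul v A)) C)) := by
    simp only [hanti (mul v A) A, map_neg, LinearMap.neg_apply, neg_neg]
  have fl9 : (mul (mul A (mul v A)) C) = -((mul C (mul A (mul v A)))) := by
    simp only [hanti (mul A (mul v A)) C, map_neg, LinearMap.neg_apply, neg_neg]
  have fl10 : (mul C (mul A (mul v A))) = -((mul C (mul A (mul A v)))) := by
    simp only [hanti v A, map_neg, LinearMap.neg_apply, neg_neg]
  have fl11 : (mul (mul (mul C v) A) A) = -((mul (mul (mul v C) A) A)) := by
    simp only [hanti C v, map_neg, LinearMap.neg_apply, neg_neg]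
  have fl12 : (mul (mul v (mul A C)) A) = -((mul (mul (mul A C) v) A)) := by
    simp only [hanti v (mul A C), map_neg, LinearMap.neg_apply, neg_neg]
  have fl13 : (mul (mul v (mul A C)) A) = -((mul (mul v (mul C A)) A)) := by
    simp only [hanti A C, map_neg, LinearMap.neg_apply, neg_neg]
  have fl14 : (mul (mul v (mul C A)) A) = -((mul A (mul v (mul C A)))) := by
    simp only [hanti (mul v (mul C A)) A, map_neg, LinearMap.neg_apply, neg_neg]
  have fl15 : (mul (mul v (mul C A)) A) = -((mul (mul (mul C A) v) A)) := by
    simp only [hanti v (mul C A), map_neg, LinearMap.neg_apply, neg_neg]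
  have fl16 : (mul A (mul v (mul C A))) = -((mul A (mul (mul C A) v))) := by
    simp only [hanti v (mul C A), map_neg, LinearMap.neg_apply, neg_neg]
  have fl17 : (mul A (mul (mul C A) v)) = -((mul A (mul (mul A C) v))) := by
    simp only [hanti C A, map_neg, LinearMap.neg_apply, neg_neg]
  have fl18 : (mul (mul C A) (mul A v)) = -((mul (mul A C) (mul A v))) := by
    simp only [hanti C A, map_neg, LinearMap.neg_apply, neg_neg]
  have fl19 : (mul (mul C A) (mul A v)) = -((mul (mul C A) (mul v A))) := by
    simp only [hanti A v, map_neg, LinearMap.neg_apply, neg_neg]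
  have fl20 : (mul (mul C A) (mul v A)) = -((mul (mul A C) (mul v A))) := by
    simp only [hanti C A, map_neg, LinearMap.neg_apply, neg_neg]
  have fl21 : (mul (mul A C) (mul v A)) = -((mul (mul v A) (mul A C))) := by
    simp only [hanti (mul A C) (mul v A), map_neg, LinearMap.neg_apply, neg_neg]
  have fl22 : (mul (mul v A) (mul A C)) = -((mul (mul A v) (mul A C))) := by
    simp only [hanti v A, map_neg, LinearMap.neg_apply, neg_neg]
  linear_combination (norm := abel) - e1 - e2 - fl3 - fl4 + fl5 + fl6 + fl7 - fl8 + fl9 - fl10 - fl11 - fl12 + fl13 + fl13 - fl14 - fl15 + fl16 - fl17 + fl18 + fl18 - fl19 + fl20 - fl21 + fl22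

lemma idF (hMal : IsMalcevMul mul) (A B C v : M) :
    (mul B (mul (mul A C) v)) + (mul C (mul A (mul B v))) + (mul (mul B C) (mul A v)) + (mul (mul (mul A B) C) v) + (mul (mul (mul B C) A) v) + (mul (mul (mul C A) B) v) = (mul C (mul (mul A B) v)) + (mul (mul B (mul A C)) v) + (mul (mul A C) (mul B v)) + (mul B (mul C (mul A v))) := by
  have hanti := hMal.1
  have e1 := lin_malcev hMal A B C v
  simp only [jac, map_add, LinearMap.add_apply] at e1
  have e2 := lin_malcev hMal A C v B
  simp only [jac, map_add, LinearMap.add_apply] at e2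
  have e3 := lin_malcev hMal A v C B
  simp only [jac, map_add, LinearMap.add_apply] at e3
  have e4 := lin_malcev hMal B C v A
  simp only [jac, map_add, LinearMap.add_apply] at e4
  have e5 := lin_malcev hMal C v A B
  simp only [jac, map_add, LinearMap.add_apply] at e5
  have fl6 : (mul (mul (mul A B) v) C) = -((mul C (mul (mul A B) v))) := by
    simp only [hanti (mul (mul A B) v) C, map_neg, LinearMap.neg_apply, neg_neg]
  have fl7 : (mul (mul (mul A B) v) C) = -((mul (mul v (mul A B)) C)) := by
    simp only [hanti (mul A B) v, map_neg, LinearMap.neg_apply, neg_neg]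
  have fl8 : (mul (mul A C) (mul v B)) = -((mul (mul C A) (mul v B))) := by
    simp only [hanti A C, map_neg, LinearMap.neg_apply, neg_neg]
  have fl9 : (mul (mul A C) (mul v B)) = -((mul (mul A C) (mul B v))) := by
    simp only [hanti v B, map_neg, LinearMap.neg_apply, neg_neg]
  have fl10 : (mul (mul v (mul C A)) B) = -((mul B (mul v (mul C A)))) := by
    simp only [hanti (mul v (mul C A)) B, map_neg, LinearMap.neg_apply, neg_neg]
  have fl11 : (mul B (mul v (mul C A))) = -((mul B (mul v (mul A C)))) := by
    simp only [hanti C A, map_neg, LinearMap.neg_apply, neg_neg]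
  have fl12 : (mul B (mul v (mul A C))) = -((mul B (mul (mul A C) v))) := by
    simp only [hanti v (mul A C), map_neg, LinearMap.neg_apply, neg_neg]
  have fl13 : (mul (mul (mul v B) A) C) = -((mul C (mul (mul v B) A))) := by
    simp only [hanti (mul (mul v B) A) C, map_neg, LinearMap.neg_apply, neg_neg]
  have fl14 : (mul (mul (mul v B) A) C) = -((mul (mul A (mul v B)) C)) := by
    simp only [hanti (mul v B) A, map_neg, LinearMap.neg_apply, neg_neg]
  have fl15 : (mul (mul (mul v B) A) C) = -((mul (mul (mul B v) A) C)) := by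
    simp only [hanti v B, map_neg, LinearMap.neg_apply, neg_neg]
  have fl16 : (mul C (mul (mul v B) A)) = -((mul C (mul (mul B v) A))) := by
    simp only [hanti v B, map_neg, LinearMap.neg_apply, neg_neg]
  have fl17 : (mul C (mul (mul B v) A)) = -((mul C (mul A (mul B v)))) := by
    simp only [hanti (mul B v) A, map_neg, LinearMap.neg_apply, neg_neg]
  have fl18 : (mul (mul (mul A B) C) v) = -((mul (mul C (mul A B)) v)) := by
    simp only [hanti (mul A B) C, map_neg, LinearMap.neg_apply, neg_neg]
  have fl19 : (mul (mul (mul A B) C) v) = -((mul (mul (mul B A) C) v)) := by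
    simp only [hanti A B, map_neg, LinearMap.neg_apply, neg_neg]
  have fl20 : (mul (mul (mul C B) v) A) = -((mul (mul v (mul C B)) A)) := by
    simp only [hanti (mul C B) v, map_neg, LinearMap.neg_apply, neg_neg]
  have fl21 : (mul (mul (mul C B) v) A) = -((mul (mul (mul B C) v) A)) := by
    simp only [hanti C B, map_neg, LinearMap.neg_apply, neg_neg]
  have fl22 : (mul (mul B v) (mul A C)) = -((mul (mul A C) (mul B v))) := by
    simp only [hanti (mul B v) (mul A C), map_neg, LinearMap.neg_apply, neg_neg]
  have fl23 : (mul (mul B v) (mul A C)) = -((mul (mul B v) (mul C A))) := by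
    simp only [hanti A C, map_neg, LinearMap.neg_apply, neg_neg]
  have fl24 : (mul (mul (mul A v) C) B) = -((mul B (mul (mul A v) C))) := by
    simp only [hanti (mul (mul A v) C) B, map_neg, LinearMap.neg_apply, neg_neg]
  have fl25 : (mul (mul (mul A v) C) B) = -((mul (mul C (mul A v)) B)) := by
    simp only [hanti (mul A v) C, map_neg, LinearMap.neg_apply, neg_neg]
  have fl26 : (mul B (mul (mul A v) C)) = -((mul B (mul C (mul A v)))) := by
    simp only [hanti (mul A v) C, map_neg, LinearMap.neg_apply, neg_neg]
  have fl27 : (mul (mul C (mul B v)) A) = -((mul A (mul C (mul B v)))) := by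
    simp only [hanti (mul C (mul B v)) A, map_neg, LinearMap.neg_apply, neg_neg]
  have fl28 : (mul (mul C (mul B v)) A) = -((mul (mul (mul B v) C) A)) := by
    simp only [hanti C (mul B v), map_neg, LinearMap.neg_apply, neg_neg]
  have fl29 : (mul (mul C (mul B v)) A) = -((mul (mul C (mul v B)) A)) := by
    simp only [hanti B v, map_neg, LinearMap.neg_apply, neg_neg]
  have fl30 : (mul A (mul C (mul B v))) = -((mul A (mul C (mul v B)))) := by
    simp only [hanti B v, map_neg, LinearMap.neg_apply, neg_neg]
  have fl31 : (mul A (mul C (mul v B))) = -((mul A (mul (mul v B) C))) := by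
    simp only [hanti C (mul v B), map_neg, LinearMap.neg_apply, neg_neg]
  have fl32 : (mul A (mul (mul v B) C)) = -((mul (mul (mul v B) C) A)) := by
    simp only [hanti A (mul (mul v B) C), map_neg, LinearMap.neg_apply, neg_neg]
  have fl33 : (mul (mul v A) (mul C B)) = -((mul (mul A v) (mul C B))) := by
    simp only [hanti v A, map_neg, LinearMap.neg_apply, neg_neg]
  have fl34 : (mul (mul A (mul B C)) v) = -((mul v (mul A (mul B C)))) := by
    simp only [hanti (mul A (mul B C)) v, map_neg, LinearMap.neg_apply, neg_neg]
  have fl35 : (mul (mul A (mul B C)) v) = -((mul (mul (mul B C) A) v)) := by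
    simp only [hanti A (mul B C), map_neg, LinearMap.neg_apply, neg_neg]
  have fl36 : (mul (mul A (mul B C)) v) = -((mul (mul A (mul C B)) v)) := by
    simp only [hanti B C, map_neg, LinearMap.neg_apply, neg_neg]
  have fl37 : (mul v (mul A (mul B C))) = -((mul v (mul A (mul C B)))) := by
    simp only [hanti B C, map_neg, LinearMap.neg_apply, neg_neg]
  have fl38 : (mul v (mul A (mul C B))) = -((mul v (mul (mul C B) A))) := by
    simp only [hanti A (mul C B), map_neg, LinearMap.neg_apply, neg_neg]
  have fl39 : (mul v (mul (mul C B) A)) = -((mul (mul (mul C B) A) v)) := by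
    simp only [hanti v (mul (mul C B) A), map_neg, LinearMap.neg_apply, neg_neg]
  have fl40 : (mul (mul (mul A C) B) v) = -((mul (mul B (mul A C)) v)) := by
    simp only [hanti (mul A C) B, map_neg, LinearMap.neg_apply, neg_neg]
  have fl41 : (mul (mul (mul A C) B) v) = -((mul (mul (mul C A) B) v)) := by
    simp only [hanti A C, map_neg, LinearMap.neg_apply, neg_neg]
  have fl42 : (mul (mul C v) (mul A B)) = -((mul (mul v C) (mul A B))) := by
    simp only [hanti C v, map_neg, LinearMap.neg_apply, neg_neg]
  have fl43 : (mul (mul C v) (mul A B)) = -((mul (mul C v) (mul B A))) := by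
    simp only [hanti A B, map_neg, LinearMap.neg_apply, neg_neg]
  have fl44 : (mul (mul (mul B A) v) C) = -((mul (mul v (mul B A)) C)) := by
    simp only [hanti (mul B A) v, map_neg, LinearMap.neg_apply, neg_neg]
  have fl45 : (mul (mul (mul v C) B) A) = -((mul (mul (mul C v) B) A)) := by
    simp only [hanti v C, map_neg, LinearMap.neg_apply, neg_neg]
  linear_combination (norm := abel) e1 + e2 + e3 + e3 - e4 + e5 - fl6 - fl7 - fl8 - fl9 + fl10 - fl11 + fl12 + fl13 - fl14 - fl15 - fl16 + fl17 - fl18 - fl18 + fl19 + fl19 + fl19 - fl20 + fl21 + fl21 - fl22 + fl23 + fl24 - fl25 - fl26 - fl27 + fl28 + fl28 - fl29 - fl29 + fl30 - fl31 + fl32 - fl33 - fl34 + fl35 + fl35 - fl36 + fl37 - fl38 + fl39 - fl40 + fl41 + fl41 + fl41 - fl42 - fl42 + fl43 + fl44 + fl45 + fl45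


lemma jac_prod_left (hMal : IsMalcevMul mul) (A C v : M) :
    jac mul (mul A C) A v = jac mul C A (mul A v) := by
  have hanti := hMal.1
  rw [jac_cyclic (mul A C) A v, hMal.2 A v C,
    jac_swap12 hanti C A (mul A v), hMal.2 A C v,
    jac_swap23 hanti A v C]
  simp

lemma isMalcevFun_starMul (hMal : IsMalcevMul mul) :
    IsMalcevFun F (starMul mul) := by
  obtain ⟨hanti, hmal⟩ := hMal
  refine ⟨?_, ?_, ?_, ?_, ?_, ?_⟩
  · intro a b c
    simp only [starMul, Prod.fst_add, Prod.snd_add, map_add, LinearMap.add_apply]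
    ext <;> simp [LinearMap.add_comp, LinearMap.comp_add] <;> abel
  · intro t a b
    simp only [starMul, Prod.smul_fst, Prod.smul_snd, map_smul, LinearMap.smul_apply,
      LinearMap.smul_comp, LinearMap.comp_smul, smul_sub, Prod.smul_mk]
  · intro a b c
    simp only [starMul, Prod.fst_add, Prod.snd_add, map_add, LinearMap.add_apply]
    ext <;> simp [LinearMap.add_comp, LinearMap.comp_add] <;> abel
  · intro t a b
    simp only [starMul, Prod.smul_fst, Prod.smul_snd, map_smul, LinearMap.smul_apply,
      LinearMap.smul_comp, LinearMap.comp_smul, smul_sub, Prod.smul_mk]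
  · intro a b
    simp only [starMul, Prod.neg_mk, Prod.mk.injEq]
    exact ⟨hanti _ _, (neg_sub _ _).symm⟩
  · intro X Y Z
    obtain ⟨A, f⟩ := X; obtain ⟨B, g⟩ := Y; obtain ⟨C, h⟩ := Z
    simp only [starMul, jacFun]
    rw [Prod.mk.injEq]
    constructor
    · exact hmal A B C
    · ext v
      simp only [Prod.fst_add, Prod.snd_add, LinearMap.sub_apply, LinearMap.add_apply,
        LinearMap.comp_apply, map_add, map_sub]
      have Hf := congrArg f (idF ⟨hanti, hmal⟩ A B C v)
      have Hg := congrArg g (idG ⟨hanti, hmal⟩ A C v)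
      have Hh := congrArg h (idH ⟨hanti, hmal⟩ A B v)
      simp only [map_add] at Hf Hg Hh
      linear_combination Hf + Hg + Hh

lemma pi2_negf (r : M ⊗[F] M) (f : Dual F M) : pi2 r (-f) = - pi2 r f := by
  induction r using TensorProduct.induction_on with
  | zero => simp
  | tmul x y => simp
  | add u v hu hv => simp [hu, hv]; abel

lemma pi2_subf (r : M ⊗[F] M) (f g : Dual F M) :
    pi2 r (f - g) = pi2 r f - pi2 r g := by
  rw [sub_eq_add_neg, pi2_addf, pi2_negf, sub_eq_add_neg]

lemma isMalcevFun_of_conj {N : Type*} [AddCommGroup N] [Module F N]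
    (m m' : N → N → N) (Φ Ψ : N → N)
    (hΦΨ : ∀ p, Φ (Ψ p) = p)
    (hΦadd : ∀ p q, Φ (p + q) = Φ p + Φ q)
    (hΦsmul : ∀ (t : F) p, Φ (t • p) = t • Φ p)
    (hΨadd : ∀ p q, Ψ (p + q) = Ψ p + Ψ q)
    (hΨsmul : ∀ (t : F) p, Ψ (t • p) = t • Ψ p)
    (hm : ∀ p q, m p q = Ψ (m' (Φ p) (Φ q)))
    (h' : IsMalcevFun F m') : IsMalcevFun F m := by
  obtain ⟨a1, s1, a2, s2, ac, mal⟩ := h'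
  have hΦm : ∀ p q, Φ (m p q) = m' (Φ p) (Φ q) := by
    intro p q; rw [hm, hΦΨ]
  have hneg : ∀ p, Ψ (-p) = - Ψ p := by
    intro p
    have := hΨsmul (-1 : F) p
    simpa using this
  refine ⟨?_, ?_, ?_, ?_, ?_, ?_⟩
  · intro a b c; rw [hm, hm, hm, hΦadd, a1, hΨadd]
  · intro t a b; rw [hm, hm, hΦsmul, s1, hΨsmul]
  · intro a b c; rw [hm, hm, hm, hΦadd, a2, hΨadd]
  · intro t a b; rw [hm, hm, hΦsmul, s2, hΨsmul]
  · intro a b; rw [hm, hm, ac, hneg]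
  · intro x y z
    have hjac : ∀ a b c, jacFun m a b c = Ψ (jacFun m' (Φ a) (Φ b) (Φ c)) := by
      intro a b c
      simp only [jacFun, hm, hΦΨ, ← hΨadd]
    rw [hjac, hΦm, mal, hm, hjac, hΦΨ]

variable {mul : M →ₗ[F] M →ₗ[F] M}

lemma comp_mulflip (hanti : ∀ a b : M, mul a b = - mul b a) (g : Dual F M) (x : M) :
    g ∘ₗ mul.flip x = -(g ∘ₗ mul x) := by
  ext c
  simp [hanti x c]

lemma doubleMul_eq_conj (hMal : IsMalcevMul mul) (r : M ⊗[F] M)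
    (hr : ∃ t : M ⊗[F] M, r = t - TensorProduct.comm F M M t)
    (hcyb : cyb mul r = 0) (p q : M × Dual F M) :
    doubleMul mul (coboundary mul r) p q =
      (fun s : M × Dual F M => (s.1 - pi2 r s.2, s.2))
        (starMul mul (p.1 + pi2 r p.2, p.2) (q.1 + pi2 r q.2, q.2)) := by
  obtain ⟨a, f⟩ := p; obtain ⟨b, g⟩ := q
  have hanti := hMal.1
  have hstar := star_identity mul r hr hanti hcyb f g
  simp only [doubleMul, starMul, rAct_coboundary, lAct_coboundary, dualMul_coboundary,
    pi1_eq_neg_pi2 r hr, comp_mulflip hanti, map_add, map_neg, LinearMap.add_apply,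
    LinearMap.neg_apply, LinearMap.comp_add, LinearMap.comp_neg, LinearMap.add_comp,
    LinearMap.neg_comp, pi2_addf, pi2_negf, pi2_subf]
  rw [Prod.mk.injEq]
  constructor
  · linear_combination (norm := abel) -hstar
  · ext c
    simp only [LinearMap.add_apply, LinearMap.sub_apply, LinearMap.neg_apply,
      LinearMap.comp_apply, map_add, map_neg]
    ring
end Star

/-- Corollary 1: a skew solution of the classical Yang–Baxter equation on a Malcev
algebra induces a Malcev bialgebra structure. -/
theorem statement3 {F : Type*} [Field F] {M : Type*} [AddCommGroup M] [Module F M]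
    (hchar : (2:F) ≠ 0)
    (mul : M →ₗ[F] M →ₗ[F] M) (hMal : IsMalcevMul mul)
    (r : M ⊗[F] M) (hr : ∃ t : M ⊗[F] M, r = t - TensorProduct.comm F M M t)
    (hcyb : cyb mul r = 0) :
    IsMalcevBialgebra mul (coboundary mul r) := by
  unfold IsMalcevBialgebra
  refine isMalcevFun_of_conj (doubleMul mul (coboundary mul r)) (starMul mul)
    (fun p => (p.1 + pi2 r p.2, p.2)) (fun p => (p.1 - pi2 r p.2, p.2))
    ?_ ?_ ?_ ?_ ?_ ?_ (isMalcevFun_starMul hMal)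
  · intro p; simp
  · intro p q
    simp only [Prod.fst_add, Prod.snd_add, pi2_addf, Prod.mk_add_mk]
    rw [Prod.mk.injEq]
    constructor
    · abel
    · rfl
  · intro t p
    simp only [Prod.smul_fst, Prod.smul_snd, pi2_smulf, Prod.smul_mk]
    rw [Prod.mk.injEq]
    constructor
    · rw [smul_add]
    · rfl
  · intro p q
    simp only [Prod.fst_add, Prod.snd_add, pi2_addf, Prod.mk_add_mk]
    rw [Prod.mk.injEq]
    constructor
    · abel
    · rfl
  · intro t p
    simp only [Prod.smul_fst, Prod.smul_snd, pi2_smulf, Prod.smul_mk]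
    rw [Prod.mk.injEq]
    constructor
    · rw [smul_sub]
    · rfl
  · exact doubleMul_eq_conj hMal r hr hcyb

end MalcevPaper
end

section
/- Let (𝕄, Δ) be a Malcev bialgebra, where 𝕄 is the 7-dimensional simple non-Lie Malcev algebra, and suppose the radical R of the Drinfeld double D(𝕄) is nonzero. Then R = R^⊥ (the orthogonal complement of R in D(𝕄) with respect to the form Q), R² = 0, and D(𝕄) = 𝕄 + R is a semidirect sum (𝕄 ∩ R = 0 and 𝕄 ⊕ R = D(𝕄) as vector spaces). -/
open TensorProduct Module

namespace MalcevPaper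

variable {F : Type*} [Field F] {M : Type*} [AddCommGroup M] [Module F M]

/-!
The form `Q` on `D(𝕄)` is symmetric, nondegenerate and invariant, and `𝕄` is a Lagrangian
subalgebra (`𝕄^⊥ = 𝕄`), so `dim D(𝕄) = 14 = 2 dim 𝕄`. Since `𝕄` is simple and perfect, every ideal
`J` of the double meets `𝕄` in `0` or contains it, and a solvable ideal cannot contain `𝕄`. Hence
`R ∩ 𝕄 = 0`, and `R^⊥`, an ideal with `R R^⊥ = 0`, also meets `𝕄` trivially (otherwise
`R ⊆ 𝕄^⊥ = 𝕄`). Counting dimensions gives `dim R = dim R^⊥ = 7`, so `D(𝕄) = 𝕄 ⊕ R`. Finally the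
ideal `R + R^⊥` either meets `𝕄` trivially, forcing `R = R^⊥`, or is everything; in the latter
case `D(𝕄) = R ⊕ R^⊥` as algebras, and projecting the perfect `𝕄` into the solvable `R` gives `0`,
i.e. `𝕄 ⊆ R^⊥`, a contradiction.
-/

section Subalgebras

variable {V W : Type*} [AddCommGroup V] [Module F V] [AddCommGroup W] [Module F W]

def IsPerfectSub (mul : V → V → V) (S : Submodule F V) : Prop :=
  Submodule.span F (Set.image2 mul (S : Set V) S) = S

theorem derivedSeries_mono (mul : V → V → V) {I J : Submodule F V} (h : I ≤ J) :
    ∀ n, derivedSeries mul I n ≤ derivedSeries mul J n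
  | 0 => h
  | n + 1 => Submodule.span_mono
      (Set.image2_subset (derivedSeries_mono mul h n) (derivedSeries_mono mul h n))

theorem IsPerfectSub.derivedSeries_eq {mul : V → V → V} {S : Submodule F V}
    (hS : IsPerfectSub mul S) : ∀ n, derivedSeries mul S n = S
  | 0 => rfl
  | n + 1 => by rw [derivedSeries, hS.derivedSeries_eq n, hS]

theorem map_derivedSeries_le {mulV : V → V → V} {mulW : W → W → W} (f : V →ₗ[F] W)
    (hf : ∀ u v, f (mulV u v) = mulW (f u) (f v)) (S : Submodule F V) :
    ∀ n, (derivedSeries mulV S n).map f ≤ derivedSeries mulW (S.map f) n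
  | 0 => le_rfl
  | n + 1 => by
      rw [derivedSeries, derivedSeries, Submodule.map_span]
      refine Submodule.span_mono ?_
      rintro _ ⟨_, ⟨a, ha, b, hb, rfl⟩, rfl⟩
      rw [hf]
      exact Set.mem_image2_of_mem (map_derivedSeries_le f hf S n (Submodule.mem_map_of_mem ha))
        (map_derivedSeries_le f hf S n (Submodule.mem_map_of_mem hb))

theorem IsPerfectSub.map_eq_bot {mulV : V → V → V} {mulW : W → W → W} {S : Submodule F V}
    (hS : IsPerfectSub mulV S) (f : V →ₗ[F] W) (hf : ∀ u v, f (mulV u v) = mulW (f u) (f v))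
    {R : Submodule F W} (hR : IsSolvableSub mulW R) (hSR : S.map f ≤ R) : S.map f = ⊥ := by
  obtain ⟨n, hn⟩ := hR
  rw [eq_bot_iff, ← hn, ← hS.derivedSeries_eq n]
  exact (map_derivedSeries_le f hf S n).trans (derivedSeries_mono mulW hSR n)

theorem IsPerfectSub.eq_bot_of_le {mul : V → V → V} {S R : Submodule F V}
    (hS : IsPerfectSub mul S) (hR : IsSolvableSub mul R) (hSR : S ≤ R) : S = ⊥ := by
  simpa using hS.map_eq_bot LinearMap.id (fun _ _ => rfl) hR (by simpa using hSR)

theorem IsPerfectSub.map {mulV : V → V → V} {mulW : W → W → W} {S : Submodule F V}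
    (hS : IsPerfectSub mulV S) (f : V →ₗ[F] W) (hf : ∀ u v, f (mulV u v) = mulW (f u) (f v)) :
    IsPerfectSub mulW (S.map f) := by
  unfold IsPerfectSub
  conv_rhs => rw [← hS]
  rw [Submodule.map_span, Set.image_image2, Submodule.map_coe, Set.image2_image_left,
    Set.image2_image_right]
  simp only [hf]

theorem inf_range_eq_bot_or_range_le {mulV : V → V → V} {mulW : W → W → W} (f : V →ₗ[F] W)
    (hf : ∀ u v, f (mulV u v) = mulW (f u) (f v))
    (hsimple : ∀ I : Submodule F V, (∀ u ∈ I, ∀ a, mulV a u ∈ I) → I = ⊥ ∨ I = ⊤)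
    {J : Submodule F W} (hJ : IsIdealFun mulW J) :
    J ⊓ LinearMap.range f = ⊥ ∨ LinearMap.range f ≤ J := by
  rcases hsimple (J.comap f) fun u hu a => by simpa [hf] using (hJ _ hu (f a)).1 with h | h
  · refine Or.inl (eq_bot_iff.mpr ?_)
    rintro _ ⟨hv, v, rfl⟩
    rw [(Submodule.mem_bot F).mp (h ▸ hv : v ∈ (⊥ : Submodule F V)), map_zero]
    exact Submodule.zero_mem _
  · exact Or.inr fun _ ⟨v, hv⟩ => hv ▸ (h ▸ Submodule.mem_top : v ∈ J.comap f)

end Subalgebras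

section InvariantForm

variable {V : Type*} [AddCommGroup V] [Module F V]

def IsInvariantForm (Q : LinearMap.BilinForm F V) (mul : V → V → V) : Prop :=
  ∀ u v w, Q (mul u v) w = Q u (mul v w)

variable {Q : LinearMap.BilinForm F V} {mul : V → V → V}

theorem IsInvariantForm.add_mul (hQ : Q.Nondegenerate) (hinv : IsInvariantForm Q mul)
    (u u' v : V) : mul (u + u') v = mul u v + mul u' v := by
  refine sub_eq_zero.mp (hQ.1 _ fun w => ?_)
  rw [map_sub, map_add, LinearMap.sub_apply, LinearMap.add_apply, hinv, hinv, hinv, map_add,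
    LinearMap.add_apply, sub_self]

theorem IsInvariantForm.mul_add (hQ : Q.Nondegenerate) (hinv : IsInvariantForm Q mul)
    (u v v' : V) : mul u (v + v') = mul u v + mul u v' := by
  refine sub_eq_zero.mp (hQ.1 _ fun w => ?_)
  rw [map_sub, map_add, LinearMap.sub_apply, LinearMap.add_apply, hinv, hinv, hinv,
    hinv.add_mul hQ, map_add, sub_self]

theorem IsIdealFun.orthogonal (hQ : Q.IsSymm) (hinv : IsInvariantForm Q mul)
    {I : Submodule F V} (hI : IsIdealFun mul I) : IsIdealFun mul (Q.orthogonal I) := by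
  intro p hp d
  simp only [LinearMap.BilinForm.mem_orthogonal_iff] at hp ⊢
  refine ⟨fun q hq => ?_, fun q hq => ?_⟩
  · rw [← hinv]
    exact hp _ (hI q hq d).2
  · rw [hQ.eq, hinv, hQ.eq]
    exact hp _ (hI q hq d).1

theorem IsIdealFun.mul_eq_zero_of_mem_orthogonal (hQ : Q.IsSymm) (hQ' : Q.Nondegenerate)
    (hinv : IsInvariantForm Q mul) {I : Submodule F V} (hI : IsIdealFun mul I)
    {u v : V} (hu : u ∈ I) (hv : v ∈ Q.orthogonal I) : mul u v = 0 ∧ mul v u = 0 := by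
  refine ⟨hQ'.1 _ fun w => ?_, hQ'.1 _ fun w => ?_⟩
  · rw [hinv]
    exact (hI.orthogonal hQ hinv v hv w).2 u hu
  · rw [hinv, hQ.eq]
    exact hv _ (hI u hu w).2

theorem IsIdealFun.sup (hQ : Q.Nondegenerate) (hinv : IsInvariantForm Q mul)
    {I J : Submodule F V} (hI : IsIdealFun mul I) (hJ : IsIdealFun mul J) :
    IsIdealFun mul (I ⊔ J) := by
  intro u hu d
  obtain ⟨a, ha, b, hb, rfl⟩ := Submodule.mem_sup.mp hu
  rw [hinv.mul_add hQ, hinv.add_mul hQ]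
  exact ⟨Submodule.add_mem_sup (hI a ha d).1 (hJ b hb d).1,
    Submodule.add_mem_sup (hI a ha d).2 (hJ b hb d).2⟩

/-- The projection onto `R` along `R^⊥` is multiplicative, and kills the perfect `S` because
`R` is solvable. -/
theorem IsPerfectSub.le_orthogonal (hQs : Q.IsSymm) (hQ : Q.Nondegenerate)
    (hinv : IsInvariantForm Q mul) {R S : Submodule F V} (hR : IsIdealFun mul R)
    (hRsolv : IsSolvableSub mul R) (hcompl : IsCompl R (Q.orthogonal R))
    (hS : IsPerfectSub mul S) : S ≤ Q.orthogonal R := by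
  set π := R.projection (Q.orthogonal R) hcompl
  have hπ : ∀ u v, π (mul u v) = mul (π u) (π v) := by
    intro u v
    have hRperp := hR.orthogonal hQs hinv
    have ha := Submodule.projection_apply_mem hcompl u
    have ha' := Submodule.projection_apply_mem hcompl v
    have hb := Submodule.projection_apply_mem hcompl.symm u
    have hb' := Submodule.projection_apply_mem hcompl.symm v
    have hsplit : mul u v = mul (π u) (π v) + mul ((Q.orthogonal R).projection R hcompl.symm u)
        ((Q.orthogonal R).projection R hcompl.symm v) := by
      conv_lhs => rw [← Submodule.projection_add_projection_eq_self hcompl u,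
        ← Submodule.projection_add_projection_eq_self hcompl v]
      rw [hinv.add_mul hQ, hinv.mul_add hQ, hinv.mul_add hQ,
        (hR.mul_eq_zero_of_mem_orthogonal hQs hQ hinv ha hb').1,
        (hR.mul_eq_zero_of_mem_orthogonal hQs hQ hinv ha' hb).2, add_zero, zero_add]
    rw [hsplit, map_add, Submodule.projection_apply_of_mem_left hcompl (hR _ ha _).2,
      Submodule.projection_apply_of_mem_right hcompl (hRperp _ hb' _).1, add_zero]
  have hmap : S.map π = ⊥ := hS.map_eq_bot π hπ hRsolv (by
    rintro _ ⟨x, -, rfl⟩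
    exact Submodule.projection_apply_mem hcompl x)
  intro x hx
  rw [← Submodule.projection_apply_eq_zero_iff hcompl]
  exact (Submodule.eq_bot_iff _).mp hmap _ (Submodule.mem_map_of_mem hx)

end InvariantForm

section Lagrangian

variable {V : Type*} [AddCommGroup V] [Module F V] {Q : LinearMap.BilinForm F V}
  {mul : V → V → V}

open LinearMap.BilinForm

theorem finrank_add_finrank_orthogonal_of_nondegenerate [FiniteDimensional F V]
    (hQ : Q.Nondegenerate) (W : Submodule F V) :
    finrank F W + finrank F (Q.orthogonal W) = finrank F V := by
  have h := finrank_add_finrank_orthogonal' (B := Q) W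
  rwa [hQ.ker_eq_bot, inf_bot_eq, finrank_bot, add_zero] at h

theorem finrank_le_of_inf_lagrangian_eq_bot [FiniteDimensional F V] (hQ : Q.Nondegenerate)
    {S J : Submodule F V} (hSS : Q.orthogonal S = S) (hJS : J ⊓ S = ⊥) :
    finrank F J ≤ finrank F S := by
  have hdisj := Submodule.finrank_add_finrank_le_of_disjoint (disjoint_iff.mpr hJS)
  have hS := finrank_add_finrank_orthogonal_of_nondegenerate hQ S
  rw [hSS] at hS
  omega

theorem orthogonal_eq_self_and_isCompl_of_isSolvableSub [FiniteDimensional F V] (hQs : Q.IsSymm)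
    (hQ : Q.Nondegenerate) (hinv : IsInvariantForm Q mul) {S R : Submodule F V}
    (hSS : Q.orthogonal S = S) (hSperf : IsPerfectSub mul S)
    (hSmin : ∀ J, IsIdealFun mul J → J ⊓ S = ⊥ ∨ S ≤ J) (hR : IsIdealFun mul R)
    (hRsolv : IsSolvableSub mul R) (hRne : R ≠ ⊥) :
    Q.orthogonal R = R ∧ IsCompl S R := by
  have hRperp := hR.orthogonal hQs hinv
  have hRS : R ⊓ S = ⊥ := (hSmin R hR).elim id fun hSR => by
    rw [hSperf.eq_bot_of_le hRsolv hSR, inf_bot_eq]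
  have hRperpS : Q.orthogonal R ⊓ S = ⊥ := (hSmin _ hRperp).elim id fun hSR => by
    have hRleS : R ≤ S :=
      (le_orthogonal_orthogonal hQs.isRefl).trans ((orthogonal_le hSR).trans hSS.le)
    exact absurd (eq_bot_iff.mpr (hRS ▸ le_inf le_rfl hRleS)) hRne
  have hdimR := finrank_le_of_inf_lagrangian_eq_bot hQ hSS hRS
  have hdimRperp := finrank_le_of_inf_lagrangian_eq_bot hQ hSS hRperpS
  have hdimV := finrank_add_finrank_orthogonal_of_nondegenerate hQ R
  have hdimS := finrank_add_finrank_orthogonal_of_nondegenerate hQ S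
  rw [hSS] at hdimS
  have hSR : S ⊔ R = ⊤ := Submodule.eq_top_of_disjoint S R (by omega)
    (disjoint_iff.mpr (by rwa [inf_comm]))
  refine ⟨?_, disjoint_iff.mpr (by rwa [inf_comm]), codisjoint_iff.mpr hSR⟩
  rcases hSmin _ (hR.sup hQ hinv hRperp) with hJS | hSJ
  · have hdimJ := finrank_le_of_inf_lagrangian_eq_bot hQ hSS hJS
    have hRJ : R = R ⊔ Q.orthogonal R :=
      Submodule.eq_of_le_of_finrank_le le_sup_left (by omega)
    exact Submodule.eq_of_le_of_finrank_le (le_sup_right.trans hRJ.ge) (by omega)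
  · have hJ : R ⊔ Q.orthogonal R = ⊤ := top_le_iff.mp (hSR ▸ sup_le hSJ le_sup_left)
    have hdisj : R ⊓ Q.orthogonal R = ⊥ := by
      have h := Submodule.finrank_sup_add_finrank_inf_eq R (Q.orthogonal R)
      rw [hJ, finrank_top] at h
      exact Submodule.finrank_eq_zero.mp (by omega)
    have hSRperp := hSperf.le_orthogonal hQs hQ hinv hR hRsolv
      ⟨disjoint_iff.mpr hdisj, codisjoint_iff.mpr hJ⟩
    have hS0 : S = ⊥ := eq_bot_iff.mpr (hRperpS ▸ le_inf hSRperp le_rfl)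
    rw [hS0, orthogonal_bot] at hSS
    exact absurd (eq_bot_iff.mpr (hSS ▸ le_top)) hRne

end Lagrangian

namespace IsStdBasis

variable {mul : M →ₗ[F] M →ₗ[F] M} {h x x' y y' z z' : M}

theorem mul_self (hb : IsStdBasis mul h x x' y y' z z') (h2 : (2:F) ≠ 0) (a : M) :
    mul a a = 0 := by
  have h2a : (2:F) • mul a a = 0 := by
    rw [two_smul]
    nth_rewrite 1 [hb.anti]
    exact neg_add_cancel _
  exact (smul_eq_zero.mp h2a).resolve_left h2

theorem exists_coords (hb : IsStdBasis mul h x x' y y' z z') (u : M) :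
    ∃ c : Fin 7 → F,
      u = c 0 • h + c 1 • x + c 2 • x' + c 3 • y + c 4 • y' + c 5 • z + c 6 • z' := by
  have hu : u ∈ Submodule.span F (Set.range ![h, x, x', y, y', z, z']) := hb.spans ▸ trivial
  obtain ⟨c, hc⟩ := (Submodule.mem_span_range_iff_exists_fun F).mp hu
  refine ⟨c, ?_⟩
  rw [← hc, Fin.sum_univ_seven]
  rfl

theorem eq_top_of_mem (hb : IsStdBasis mul h x x' y y' z z') (h2 : (2:F) ≠ 0)
    {I : Submodule F M} (hI : ∀ u ∈ I, ∀ a, mul a u ∈ I) (hh : h ∈ I) : I = ⊤ := by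
  have key : ∀ (w : M) (t : F), t ≠ 0 → mul w h = t • w → w ∈ I := fun w t ht hw =>
    (Submodule.smul_mem_iff I ht).mp (hw ▸ hI h hh w)
  have hn2 : (-2:F) ≠ 0 := neg_ne_zero.mpr h2
  rw [eq_top_iff, ← hb.spans, Submodule.span_le]
  rintro _ ⟨i, rfl⟩
  fin_cases i
  · exact hh
  · exact key x (-2) hn2 (by rw [hb.anti, hb.mul_h_x]; module)
  · exact key x' 2 h2 (by rw [hb.anti, hb.mul_h_x']; module)
  · exact key y (-2) hn2 (by rw [hb.anti, hb.mul_h_y]; module)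
  · exact key y' 2 h2 (by rw [hb.anti, hb.mul_h_y']; module)
  · exact key z (-2) hn2 (by rw [hb.anti, hb.mul_h_z]; module)
  · exact key z' 2 h2 (by rw [hb.anti, hb.mul_h_z']; module)

/-- `ad h` acts diagonally with eigenvalues `0, 2, -2`, and these combinations of `u`,
`h u` and `h (h u)` are its weight components. -/
theorem weight_components_mem (hb : IsStdBasis mul h x x' y y' z z') (h2 : (2:F) ≠ 0)
    {I : Submodule F M} (hI : ∀ u ∈ I, ∀ a, mul a u ∈ I) {u : M} (hu : u ∈ I) (c : Fin 7 → F)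
    (hc : u = c 0 • h + c 1 • x + c 2 • x' + c 3 • y + c 4 • y' + c 5 • z + c 6 • z') :
    (4 * c 0) • h ∈ I ∧ (8:F) • (c 1 • x + c 3 • y + c 5 • z) ∈ I ∧
      (8:F) • (c 2 • x' + c 4 • y' + c 6 • z') ∈ I := by
  have hhu : mul h u = (2 * c 1) • x - (2 * c 2) • x' + (2 * c 3) • y - (2 * c 4) • y'
      + (2 * c 5) • z - (2 * c 6) • z' := by
    rw [hc]
    simp only [map_add, map_smul, hb.mul_h_x, hb.mul_h_x', hb.mul_h_y, hb.mul_h_y',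
      hb.mul_h_z, hb.mul_h_z', hb.mul_self h2]
    module
  have hhhu : mul h (mul h u) = (4 * c 1) • x + (4 * c 2) • x' + (4 * c 3) • y
      + (4 * c 4) • y' + (4 * c 5) • z + (4 * c 6) • z' := by
    rw [hhu]
    simp only [map_add, map_sub, map_smul, hb.mul_h_x, hb.mul_h_x', hb.mul_h_y, hb.mul_h_y',
      hb.mul_h_z, hb.mul_h_z']
    module
  have hmem1 := hI u hu h
  have hmem2 := hI _ hmem1 h
  refine ⟨?_, ?_, ?_⟩
  · convert I.sub_mem (I.smul_mem 4 hu) hmem2 using 1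
    rw [hhhu, hc]; module
  · convert I.add_mem hmem2 (I.smul_mem 2 hmem1) using 1
    rw [hhhu, hhu]; module
  · convert I.sub_mem hmem2 (I.smul_mem 2 hmem1) using 1
    rw [hhhu, hhu]; module

/-- Multiplying the weight `±2` components by the basis vectors of opposite weight isolates
each coordinate as a multiple of `h`. -/
theorem coord_smul_mem (hb : IsStdBasis mul h x x' y y' z z') (h2 : (2:F) ≠ 0)
    {I : Submodule F M} (hI : ∀ u ∈ I, ∀ a, mul a u ∈ I) {u : M} (hu : u ∈ I) (c : Fin 7 → F)
    (hc : u = c 0 • h + c 1 • x + c 2 • x' + c 3 • y + c 4 • y' + c 5 • z + c 6 • z') :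
    ∀ i, c i • h ∈ I := by
  have h4 : (4:F) ≠ 0 := by have := mul_ne_zero h2 h2; norm_num at this; exact this
  have h8 : (8:F) ≠ 0 := by have := mul_ne_zero h2 h4; norm_num at this; exact this
  have hn8 : (-8:F) ≠ 0 := neg_ne_zero.mpr h8
  obtain ⟨hzero, hplus, hminus⟩ := hb.weight_components_mem h2 hI hu c hc
  have of_mul : ∀ (i : Fin 7) (k : F) (a w : M), k ≠ 0 → w ∈ I → mul a w = (k * c i) • h →
      c i • h ∈ I := fun i k a w hk hw he =>
    (Submodule.smul_mem_iff I hk).mp (by rw [smul_smul, ← he]; exact hI w hw a)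
  intro i
  fin_cases i <;> simp only [Fin.zero_eta, Fin.mk_one, Fin.reduceFinMk]
  · exact (Submodule.smul_mem_iff I h4).mp (by rwa [smul_smul])
  · exact of_mul 1 (-8) x' _ hn8 hplus (by
      simp only [map_smul, map_add, hb.anti x' x, hb.mul_x_x', hb.mul_x'_y, hb.mul_x'_z]
      module)
  · exact of_mul 2 8 x _ h8 hminus (by
      simp only [map_smul, map_add, hb.mul_x_x', hb.mul_x_y', hb.mul_x_z']
      module)
  · exact of_mul 3 (-8) y' _ hn8 hplus (by
      simp only [map_smul, map_add, hb.anti y' x, hb.mul_x_y', hb.anti y' y, hb.mul_y_y',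
        hb.mul_y'_z]
      module)
  · exact of_mul 4 8 y _ h8 hminus (by
      simp only [map_smul, map_add, hb.anti y x', hb.mul_x'_y, hb.mul_y_y', hb.mul_y_z']
      module)
  · exact of_mul 5 (-8) z' _ hn8 hplus (by
      simp only [map_smul, map_add, hb.anti z' x, hb.mul_x_z', hb.anti z' y, hb.mul_y_z',
        hb.anti z' z, hb.mul_z_z']
      module)
  · exact of_mul 6 8 z _ h8 hminus (by
      simp only [map_smul, map_add, hb.anti z x', hb.mul_x'_z, hb.anti z y', hb.mul_y'_z,
        hb.mul_z_z']
      module)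

theorem eq_bot_or_eq_top (hb : IsStdBasis mul h x x' y y' z z') (h2 : (2:F) ≠ 0)
    {I : Submodule F M} (hI : ∀ u ∈ I, ∀ a, mul a u ∈ I) : I = ⊥ ∨ I = ⊤ := by
  refine or_iff_not_imp_left.mpr fun hI0 => hb.eq_top_of_mem h2 hI ?_
  obtain ⟨u, hu, hu0⟩ := Submodule.exists_mem_ne_zero_of_ne_bot hI0
  obtain ⟨c, hc⟩ := hb.exists_coords u
  obtain ⟨i, hi⟩ : ∃ i, c i ≠ 0 := by
    by_contra! hc0
    exact hu0 (by simp [hc, hc0])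
  exact (Submodule.smul_mem_iff I hi).mp (hb.coord_smul_mem h2 hI hu c hc i)

theorem isPerfectSub_top (hb : IsStdBasis mul h x x' y y' z z') (h2 : (2:F) ≠ 0) :
    IsPerfectSub (fun a b => mul a b) (⊤ : Submodule F M) := by
  have hh : h ≠ 0 := by simpa using hb.indep.ne_zero 0
  refine (hb.eq_bot_or_eq_top h2 (I := Submodule.span F _) ?_).resolve_left ?_
  · exact fun u _ a => Submodule.subset_span ⟨a, trivial, u, trivial, rfl⟩
  · exact (Submodule.ne_bot_iff _).mpr
      ⟨h, Submodule.subset_span ⟨x, trivial, x', trivial, hb.mul_x_x'⟩, hh⟩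

end IsStdBasis

section Double

theorem apply_rAct (Δ : M →ₗ[F] M ⊗[F] M) (f g : Dual F M) (b : M) :
    g (rAct Δ f b) = f (lAct Δ g b) := by
  unfold rAct lAct
  induction Δ b using TensorProduct.induction_on with
  | zero => simp
  | tmul x y => simp only [TensorProduct.lift.tmul, LinearMap.flip_apply, LinearMap.comp_apply,
      LinearMap.lsmul_apply, map_smul, smul_eq_mul]; ring
  | add s t hs ht => simp only [map_add, hs, ht]

theorem apply_lAct (Δ : M →ₗ[F] M ⊗[F] M) (f g : Dual F M) (a : M) :
    g (lAct Δ f a) = dualMul Δ f g a := by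
  unfold lAct dualMul
  simp only [LinearMap.comp_apply, LinearEquiv.coe_toLinearMap]
  induction Δ a using TensorProduct.induction_on with
  | zero => simp
  | tmul x y => simp
  | add s t hs ht => simp only [map_add, hs, ht]

theorem dualMul_apply (Δ : M →ₗ[F] M ⊗[F] M) (f g : Dual F M) (c : M) :
    dualMul Δ f g c = f (rAct Δ g c) := by
  unfold rAct dualMul
  simp only [LinearMap.comp_apply, LinearEquiv.coe_toLinearMap]
  induction Δ c using TensorProduct.induction_on with
  | zero => simp
  | tmul x y =>
    simp only [TensorProduct.map_tmul, TensorProduct.lid_tmul, smul_eq_mul,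
      TensorProduct.lift.tmul, LinearMap.flip_apply, LinearMap.coe_comp, Function.comp_apply,
      LinearMap.lsmul_apply, map_smul]
    ring
  | add s t hs ht => simp only [map_add, hs, ht]

theorem doubleMul_inl (mul : M →ₗ[F] M →ₗ[F] M) (Δ : M →ₗ[F] M ⊗[F] M) (a b : M) :
    doubleMul mul Δ (LinearMap.inl F M (Dual F M) a) (LinearMap.inl F M (Dual F M) b) =
      LinearMap.inl F M (Dual F M) (mul a b) := by
  have hr : rAct Δ 0 b = 0 :=
    (Module.forall_dual_apply_eq_zero_iff F _).mp fun g => by rw [apply_rAct]; rfl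
  have hl : lAct Δ 0 a = 0 :=
    (Module.forall_dual_apply_eq_zero_iff F _).mp fun g => by rw [apply_lAct, dualMul_apply]; rfl
  have hd : dualMul Δ (0 : Dual F M) 0 = 0 := LinearMap.ext fun c => by rw [dualMul_apply]; rfl
  simp [doubleMul, hr, hl, hd]

/-- The form `Q` on the Drinfeld double. -/
noncomputable def doubleForm : LinearMap.BilinForm F (M × Dual F M) :=
  LinearMap.mk₂ F (fun p q => q.2 p.1 + p.2 q.1)
    (by intro p p' q; simp only [Prod.fst_add, Prod.snd_add, map_add, LinearMap.add_apply]; ring)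
    (by intro c p q; simp only [Prod.smul_fst, Prod.smul_snd, map_smul, LinearMap.smul_apply,
          smul_eq_mul]; ring)
    (by intro p q q'; simp only [Prod.fst_add, Prod.snd_add, map_add, LinearMap.add_apply]; ring)
    (by intro c p q; simp only [Prod.smul_fst, Prod.smul_snd, map_smul, LinearMap.smul_apply,
          smul_eq_mul]; ring)

theorem doubleForm_apply (p q : M × Dual F M) :
    doubleForm p q = q.2 p.1 + p.2 q.1 := rfl

theorem doubleForm_isSymm : (doubleForm : LinearMap.BilinForm F (M × Dual F M)).IsSymm :=
  ⟨fun p q => by simp only [doubleForm_apply]; ring⟩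

theorem doubleForm_nondegenerate :
    (doubleForm : LinearMap.BilinForm F (M × Dual F M)).Nondegenerate := by
  have hsep : ∀ p : M × Dual F M, (∀ q, doubleForm p q = 0) → p = 0 := fun p hp =>
    Prod.ext ((Module.forall_dual_apply_eq_zero_iff F p.1).mp fun f => by
        simpa [doubleForm_apply] using hp (0, f))
      (LinearMap.ext fun b => by simpa [doubleForm_apply] using hp (b, 0))
  exact ⟨hsep, fun q hq => hsep q fun p => doubleForm_isSymm.eq q p ▸ hq p⟩

theorem doubleForm_isInvariantForm (mul : M →ₗ[F] M →ₗ[F] M) (Δ : M →ₗ[F] M ⊗[F] M) :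
    IsInvariantForm doubleForm (doubleMul mul Δ) := by
  intro u v w
  simp only [doubleMul, doubleForm_apply, map_add, LinearMap.add_apply, LinearMap.comp_apply,
    LinearMap.flip_apply]
  rw [apply_rAct Δ u.2 w.2 v.1, apply_lAct Δ v.2 w.2 u.1, dualMul_apply Δ u.2 v.2 w.1]
  ring

theorem doubleForm_orthogonal_range_inl :
    doubleForm.orthogonal (LinearMap.range (LinearMap.inl F M (Dual F M))) =
      LinearMap.range (LinearMap.inl F M (Dual F M)) := by
  ext p
  simp only [LinearMap.BilinForm.mem_orthogonal_iff, LinearMap.mem_range, forall_exists_index,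
    forall_apply_eq_imp_iff, LinearMap.inl_apply, doubleForm_apply, LinearMap.zero_apply,
    add_zero]
  constructor
  · exact fun hp => ⟨p.1, Prod.ext rfl (LinearMap.ext hp).symm⟩
  · rintro ⟨a, rfl⟩ b
    rfl

end Double

theorem statement5_general {F : Type*} [Field F]
    {M : Type*} [AddCommGroup M] [Module F M]
    (h2 : (2:F) ≠ 0)
    (mul : M →ₗ[F] M →ₗ[F] M)
    (hM : ∃ a₁ a₂ a₃ a₄ a₅ a₆ a₇ : M, IsStdBasis mul a₁ a₂ a₃ a₄ a₅ a₆ a₇)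
    (Δ : M →ₗ[F] M ⊗[F] M)
    (R : Submodule F (M × Dual F M))
    (hR : IsRadicalOf (doubleMul mul Δ) R) (hRne : R ≠ ⊥) :
    (R : Set (M × Dual F M)) = {p : M × Dual F M | ∀ q ∈ R, q.2 p.1 + p.2 q.1 = 0} ∧
    (∀ u ∈ R, ∀ v ∈ R, doubleMul mul Δ u v = 0) ∧
    LinearMap.range (LinearMap.inl F M (Dual F M)) ⊓ R = ⊥ ∧
    LinearMap.range (LinearMap.inl F M (Dual F M)) ⊔ R = ⊤ := by
  obtain ⟨h, x, x', y, y', z, z', hb⟩ := hM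
  obtain ⟨hRideal, hRsolv, -⟩ := hR
  have : FiniteDimensional F M := Module.Finite.of_basis (Basis.mk hb.indep hb.spans.ge)
  set inl := LinearMap.inl F M (Dual F M)
  have hinl : ∀ a b, inl (mul a b) = doubleMul mul Δ (inl a) (inl b) :=
    fun a b => (doubleMul_inl mul Δ a b).symm
  have hperfect : IsPerfectSub (doubleMul mul Δ) (LinearMap.range inl) := by
    simpa using (hb.isPerfectSub_top h2).map inl hinl
  obtain ⟨hperp, hcompl⟩ := orthogonal_eq_self_and_isCompl_of_isSolvableSub doubleForm_isSymm
    doubleForm_nondegenerate (doubleForm_isInvariantForm mul Δ) doubleForm_orthogonal_range_inl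
    hperfect (fun J hJ => inf_range_eq_bot_or_range_le inl hinl
      (fun I hI => hb.eq_bot_or_eq_top h2 hI) hJ) hRideal hRsolv hRne
  refine ⟨?_, fun u hu v hv => (hRideal.mul_eq_zero_of_mem_orthogonal doubleForm_isSymm
    doubleForm_nondegenerate (doubleForm_isInvariantForm mul Δ) hu (by rwa [hperp])).1,
    hcompl.inf_eq_bot, hcompl.sup_eq_top⟩
  ext p
  conv_lhs => rw [← hperp]
  exact forall₂_congr fun q _ => by rw [doubleForm_apply, add_comm]

/-- Lemma 4: if the radical `R` of the Drinfeld double `D(𝕄)` is nonzero, then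
`R = R^⊥` (w.r.t. `Q`), `R² = 0`, and `D(𝕄) = 𝕄 + R` is a semidirect sum. -/
theorem statement5 {F : Type*} [Field F] [IsAlgClosed F]
    {M : Type*} [AddCommGroup M] [Module F M]
    (h2 : (2:F) ≠ 0) (h3 : (3:F) ≠ 0)
    (mul : M →ₗ[F] M →ₗ[F] M) (hMal : IsMalcevMul mul)
    (hM : ∃ a₁ a₂ a₃ a₄ a₅ a₆ a₇ : M, IsStdBasis mul a₁ a₂ a₃ a₄ a₅ a₆ a₇)
    (Δ : M →ₗ[F] M ⊗[F] M) (hbi : IsMalcevBialgebra mul Δ)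
    (R : Submodule F (M × Dual F M))
    (hR : IsRadicalOf (doubleMul mul Δ) R) (hRne : R ≠ ⊥) :
    (R : Set (M × Dual F M)) = {p : M × Dual F M | ∀ q ∈ R, q.2 p.1 + p.2 q.1 = 0} ∧
    (∀ u ∈ R, ∀ v ∈ R, doubleMul mul Δ u v = 0) ∧
    LinearMap.range (LinearMap.inl F M (Dual F M)) ⊓ R = ⊥ ∧
    LinearMap.range (LinearMap.inl F M (Dual F M)) ⊔ R = ⊤ :=
  statement5_general h2 mul hM Δ R hR hRne

end MalcevPaper
end

section
/- Let M(4) be the subalgebra of the simple non-Lie Malcev algebra 𝕄 spanned by h, x, y', z, and let ω be a nondegenerate skew-symmetric bilinear form on M(4). Then ω is a symplectic form (i.e. ω(ab,c) + ω(bc,a) + ω(ca,b) = 0 for all a,b,c ∈ M(4)) if and only if ω(y', h) = 2ω(x, z). -/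
open TensorProduct Module

namespace MalcevPaper

variable {F : Type*} [Field F] {M : Type*} [AddCommGroup M] [Module F M]

/-- Lemma 5 (case 3): a nondegenerate skew-symmetric bilinear form on `M(4)` is
symplectic iff `ω(y',h) = 2 ω(x,z)`. -/
theorem statement9 {F : Type*} [Field F] [IsAlgClosed F]
    {M : Type*} [AddCommGroup M] [Module F M]
    (h2 : (2:F) ≠ 0) (h3 : (3:F) ≠ 0)
    (mul : M →ₗ[F] M →ₗ[F] M) (hMal : IsMalcevMul mul)
    (h x x' y y' z z' : M) (hstd : IsStdBasis mul h x x' y y' z z')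
    (ω : M →ₗ[F] M →ₗ[F] F)
    (hnd : ∀ a ∈ Submodule.span F {h, x, y', z},
      (∀ b ∈ Submodule.span F {h, x, y', z}, ω a b = 0) → a = 0)
    (hskew : ∀ a ∈ Submodule.span F {h, x, y', z}, ∀ b ∈ Submodule.span F {h, x, y', z},
      ω a b = - ω b a) :
    (∀ a ∈ Submodule.span F {h, x, y', z}, ∀ b ∈ Submodule.span F {h, x, y', z},
      ∀ c ∈ Submodule.span F {h, x, y', z},
        ω (mul a b) c + ω (mul b c) a + ω (mul c a) b = 0) ↔
      ω y' h = 2 * ω x z := by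
  have memh : h ∈ Submodule.span F {h, x, y', z} := Submodule.subset_span (by simp)
  have memx : x ∈ Submodule.span F {h, x, y', z} := Submodule.subset_span (by simp)
  have memy' : y' ∈ Submodule.span F {h, x, y', z} := Submodule.subset_span (by simp)
  have memz : z ∈ Submodule.span F {h, x, y', z} := Submodule.subset_span (by simp)
  -- products
  have mself : ∀ a : M, mul a a = 0 := by
    intro a
    have e := hstd.anti a a
    have e2 : mul a a + mul a a = 0 := by nth_rewrite 1 [e]; simp
    have e3 : (2:F) • mul a a = 0 := by rw [two_smul]; exact e2
    rcases smul_eq_zero.mp e3 with h' | h'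
    · exact absurd h' h2
    · exact h'
  have mxh : mul x h = -((2:F) • x) := by rw [hstd.anti, hstd.mul_h_x]
  have my'h : mul y' h = (2:F) • y' := by rw [hstd.anti, hstd.mul_h_y']; simp
  have mzh : mul z h = -((2:F) • z) := by rw [hstd.anti, hstd.mul_h_z]
  have mxz : mul x z = -((2:F) • y') := by rw [hstd.anti, hstd.mul_z_x]
  have my'x : mul y' x = 0 := by rw [hstd.anti, hstd.mul_x_y']; simp
  have mzy' : mul z y' = 0 := by rw [hstd.anti, hstd.mul_y'_z]; simp
  -- skew facts on basis
  have ωdiag : ∀ a ∈ Submodule.span F {h, x, y', z}, ω a a = 0 := by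
    intro a ma
    have e := hskew a ma a ma
    have e2 : (2:F) * ω a a = 0 := by linear_combination e
    rcases mul_eq_zero.mp e2 with h' | h'
    · exact absurd h' h2
    · exact h'
  have ωhh := ωdiag h memh
  have ωxx := ωdiag x memx
  have ωy'y' := ωdiag y' memy'
  have ωzz := ωdiag z memz
  have ωxh : ω x h = -ω h x := hskew x memx h memh
  have ωy'h : ω y' h = -ω h y' := hskew y' memy' h memh
  have ωzh : ω z h = -ω h z := hskew z memz h memh
  have ωy'x : ω y' x = -ω x y' := hskew y' memy' x memx
  have ωzx : ω z x = -ω x z := hskew z memz x memx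
  have ωzy' : ω z y' = -ω y' z := hskew z memz y' memy'
  constructor
  · intro hsymp
    have e := hsymp h memh x memx z memz
    rw [hstd.mul_h_x, mxz, mzh] at e
    simp only [map_smul, map_neg, LinearMap.smul_apply, LinearMap.neg_apply,
      smul_eq_mul] at e
    have e2 : (2:F) * (ω y' h - 2 * ω x z) = 0 := by linear_combination -e - 2 * ωzx
    rcases mul_eq_zero.mp e2 with h' | h'
    · exact absurd h' h2
    · linear_combination h'
  · intro hyp
    have ωhy' : ω h y' = -(2 * ω x z) := by linear_combination ωy'h - hyp
    intro a ma b mb c mc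
    induction ma using Submodule.span_induction with
    | mem a ha =>
      induction mb using Submodule.span_induction with
      | mem b hb =>
        induction mc using Submodule.span_induction with
        | mem c hc =>
          simp only [Set.mem_insert_iff, Set.mem_singleton_iff] at ha hb hc
          rcases ha with rfl | rfl | rfl | rfl <;>
            rcases hb with rfl | rfl | rfl | rfl <;>
              rcases hc with rfl | rfl | rfl | rfl <;>
          simp only [mself, hstd.mul_h_x, hstd.mul_h_y', hstd.mul_h_z, hstd.mul_z_x,
            hstd.mul_x_y', hstd.mul_y'_z, mxh, my'h, mzh, mxz, my'x, mzy',
            map_smul, map_neg, map_zero, LinearMap.smul_apply, LinearMap.neg_apply,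
            LinearMap.zero_apply, smul_eq_mul, ωhh, ωxx, ωy'y', ωzz,
            ωxh, ωy'h, ωzh, ωy'x, ωzx, ωzy', ωhy'] <;> ring
        | zero => simp
        | add u v hu hv ihu ihv => simp only [map_add, LinearMap.add_apply] at *; linear_combination ihu + ihv
        | smul t u hu ihu => simp only [map_smul, LinearMap.smul_apply, smul_eq_mul] at *; linear_combination t * ihu
      | zero => simp
      | add u v hu hv ihu ihv => simp only [map_add, LinearMap.add_apply] at *; linear_combination ihu + ihv
      | smul t u hu ihu => simp only [map_smul, LinearMap.smul_apply, smul_eq_mul] at *; linear_combination t * ihu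
    | zero => simp
    | add u v hu hv ihu ihv => simp only [map_add, LinearMap.add_apply] at *; linear_combination ihu + ihv
    | smul t u hu ihu => simp only [map_smul, LinearMap.smul_apply, smul_eq_mul] at *; linear_combination t * ihu


end MalcevPaper
end

section
/- Let K be a Malcev algebra over a field of characteristic not equal to 2 and let r ∈ K⊗K with s = (1/2)(r + τ(r)) and n = (1/2)(r − τ(r)). Write s = Σ_i a_i⊗b_i. Suppose C_K(r) = 0 and [s, a] = 0 for all a ∈ K, where [x⊗y, a] = xa⊗y + x⊗ya extended linearly. Then Σ_{i,j} a_i⊗a_j⊗(b_i b_j) + C_K(n) = 0. -/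
open TensorProduct Module

namespace MalcevPaper

variable {F : Type*} [Field F] {M : Type*} [AddCommGroup M] [Module F M]

section Aux
variable {F : Type*} [Field F] {K : Type*} [AddCommGroup K] [Module F K]

private lemma comm_comm_apply (z : K ⊗[F] K) :
    TensorProduct.comm F K K (TensorProduct.comm F K K z) = z := by
  induction z using TensorProduct.induction_on with
  | zero => simp
  | tmul x y => simp
  | add a b ha hb => simp [ha, hb]

noncomputable def einv (mul : K →ₗ[F] K →ₗ[F] K) (u : K) :
    K ⊗[F] K →ₗ[F] K ⊗[F] K :=
  TensorProduct.map (mul.flip u) LinearMap.id + TensorProduct.map LinearMap.id (mul.flip u)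

lemma lemA (mul : K →ₗ[F] K →ₗ[F] K) (hanti : ∀ a b : K, mul a b = - mul b a)
    (u v : K) (w : K ⊗[F] K) :
    cybT1 mul (w ⊗ₜ[F] (u ⊗ₜ[F] v)) - cybT2 mul (w ⊗ₜ[F] (u ⊗ₜ[F] v)) =
      (TensorProduct.assoc F K K K) ((einv mul u w) ⊗ₜ[F] v) := by
  induction w using TensorProduct.induction_on with
  | zero => simp
  | tmul x y =>
      simp only [cybT1, cybT2, einv, LinearMap.comp_apply, LinearEquiv.coe_coe,
        TensorProduct.map_tmul, TensorProduct.tensorTensorTensorComm_tmul,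
        TensorProduct.lift.tmul, TensorProduct.leftComm_tmul, TensorProduct.comm_tmul,
        LinearMap.id_apply, LinearMap.add_apply, LinearMap.flip_apply, add_tmul,
        TensorProduct.assoc_tmul, map_add]
      rw [hanti u y]
      simp only [map_neg, neg_tmul, tmul_neg]
      abel
  | add a b ha hb =>
      simp only [add_tmul, map_add] at *
      linear_combination (norm := abel) ha + hb

lemma lemB (mul : K →ₗ[F] K →ₗ[F] K) (hanti : ∀ a b : K, mul a b = - mul b a)
    (u v : K) (w : K ⊗[F] K) :
    cybT2 mul ((u ⊗ₜ[F] v) ⊗ₜ[F] w) - cybT3 mul ((u ⊗ₜ[F] v) ⊗ₜ[F] w) =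
      u ⊗ₜ[F] (einv mul v w) := by
  induction w using TensorProduct.induction_on with
  | zero => simp
  | tmul x y =>
      simp only [cybT2, cybT3, einv, LinearMap.comp_apply, LinearEquiv.coe_coe,
        TensorProduct.map_tmul, TensorProduct.tensorTensorTensorComm_tmul,
        TensorProduct.lift.tmul, TensorProduct.leftComm_tmul, TensorProduct.comm_tmul,
        LinearMap.id_apply, LinearMap.add_apply, LinearMap.flip_apply,
        TensorProduct.assoc_tmul, tmul_add]
      rw [hanti v y]
      simp only [map_neg, neg_tmul, tmul_neg]
      abel
  | add a b ha hb =>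
      simp only [tmul_add, map_add] at *
      linear_combination (norm := abel) ha + hb

lemma lemC (mul : K →ₗ[F] K →ₗ[F] K) (hanti : ∀ a b : K, mul a b = - mul b a)
    (u v : K) (w : K ⊗[F] K) :
    cybT1 mul ((u ⊗ₜ[F] v) ⊗ₜ[F] w) - cybT3 mul (w ⊗ₜ[F] (v ⊗ₜ[F] u)) =
      - (TensorProduct.leftComm F K K K) (v ⊗ₜ[F] (einv mul u w)) := by
  induction w using TensorProduct.induction_on with
  | zero => simp
  | tmul x y =>
      simp only [cybT1, cybT3, einv, LinearMap.comp_apply, LinearEquiv.coe_coe,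
        TensorProduct.map_tmul, TensorProduct.tensorTensorTensorComm_tmul,
        TensorProduct.lift.tmul, TensorProduct.leftComm_tmul, TensorProduct.comm_tmul,
        LinearMap.id_apply, LinearMap.add_apply, LinearMap.flip_apply,
        TensorProduct.assoc_tmul, tmul_add]
      rw [hanti u x]
      simp only [map_neg, neg_tmul, tmul_neg]
      abel
  | add a b ha hb =>
      simp only [add_tmul, tmul_add, map_add] at *
      linear_combination (norm := abel) ha + hb

end Aux

/-- Equation (15) in the proof of Lemma 6: `Σ aᵢ ⊗ aⱼ ⊗ bᵢbⱼ + C_K(n) = 0`, where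
`s = Σ aᵢ ⊗ bᵢ` is the symmetric part and `n` the antisymmetric part of `r`. -/
theorem statement11 {F : Type*} [Field F] {K : Type*} [AddCommGroup K] [Module F K]
    (hchar : (2:F) ≠ 0)
    (mul : K →ₗ[F] K →ₗ[F] K) (hMal : IsMalcevMul mul)
    (r : K ⊗[F] K)
    (s : K ⊗[F] K) (hs : s = (2:F)⁻¹ • (r + TensorProduct.comm F K K r))
    (n : K ⊗[F] K) (hn : n = (2:F)⁻¹ • (r - TensorProduct.comm F K K r))
    (hcyb : cyb mul r = 0)
    (hinv : ∀ a : K,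
      ((TensorProduct.map (mul.flip a) LinearMap.id
        + TensorProduct.map LinearMap.id (mul.flip a)) : K ⊗[F] K →ₗ[F] K ⊗[F] K) s = 0) :
    cybT3 mul (s ⊗ₜ[F] s) + cyb mul n = 0 := by
  have hanti := hMal.1
  have hinv' : ∀ a : K, einv mul a s = 0 := hinv
  -- r = s + n
  have hr : r = s + n := by
    rw [hs, hn, ← smul_add]
    have : r + TensorProduct.comm F K K r + (r - TensorProduct.comm F K K r)
        = (2:F) • r := by rw [two_smul]; abel
    rw [this, smul_smul, inv_mul_cancel₀ hchar, one_smul]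
  -- symmetry of s, antisymmetry of n
  have hτn : TensorProduct.comm F K K n = -n := by
    rw [hn, map_smul, map_sub, comm_comm_apply, ← smul_neg, neg_sub]
  -- the three consequences of invariance
  have L1 : ∀ t : K ⊗[F] K, cybT1 mul (s ⊗ₜ[F] t) = cybT2 mul (s ⊗ₜ[F] t) := by
    intro t
    induction t using TensorProduct.induction_on with
    | zero => simp
    | tmul u v =>
        have h := lemA mul hanti u v s
        rw [hinv' u] at h
        simpa [sub_eq_zero] using h
    | add a b ha hb => simp only [tmul_add, map_add, ha, hb]
  have L2 : ∀ t : K ⊗[F] K, cybT2 mul (t ⊗ₜ[F] s) = cybT3 mul (t ⊗ₜ[F] s) := by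
    intro t
    induction t using TensorProduct.induction_on with
    | zero => simp
    | tmul u v =>
        have h := lemB mul hanti u v s
        rw [hinv' v] at h
        simpa [sub_eq_zero] using h
    | add a b ha hb => simp only [add_tmul, map_add, ha, hb]
  have L3 : ∀ t : K ⊗[F] K,
      cybT1 mul (t ⊗ₜ[F] s) = cybT3 mul (s ⊗ₜ[F] (TensorProduct.comm F K K t)) := by
    intro t
    induction t using TensorProduct.induction_on with
    | zero => simp
    | tmul u v =>
        have h := lemC mul hanti u v s
        rw [hinv' u] at h
        simp only [tmul_zero, map_zero, neg_zero, sub_eq_zero] at h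
        simpa using h
    | add a b ha hb => simp only [add_tmul, tmul_add, map_add, ha, hb]
  have hns : cybT1 mul (n ⊗ₜ[F] s) = - cybT3 mul (s ⊗ₜ[F] n) := by
    rw [L3 n, hτn, tmul_neg, map_neg]
  -- assemble
  have key : cyb mul r = cybT3 mul (s ⊗ₜ[F] s) + cyb mul n := by
    rw [hr]
    simp only [cyb, add_tmul, tmul_add, map_add]
    rw [L1 s, L1 n, hns, L2 n, L2 s]
    abel
  rw [hcyb] at key
  exact key.symm

end MalcevPaper
end

section
/- Let 𝕄 be the 7-dimensional simple non-Lie Malcev algebra with standard basis h,x,x',y,y',z,z', and let l = h⊗s_1 + x⊗s_2 + x'⊗s_3 + y⊗s_4 + y'⊗s_5 + z⊗s_6 + z'⊗s_7 ∈ 𝕄⊗𝕄 (with s_1,…,s_7 ∈ 𝕄) be such that [l, a] = 0 for all a ∈ 𝕄, where [u⊗v, a] = ua⊗v + u⊗va extended linearly. Then there exists c ∈ F such that l = c·( (1/2)h⊗h + x⊗x' + x'⊗x + y⊗y' + y'⊗y + z⊗z' + z'⊗z ). -/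
open TensorProduct Module

namespace MalcevPaper

variable {F : Type*} [Field F] {M : Type*} [AddCommGroup M] [Module F M]

/-- Lemma 7: any `𝕄`-invariant element `l ∈ 𝕄 ⊗ 𝕄` is a scalar multiple of
`(1/2)h⊗h + x⊗x' + x'⊗x + y⊗y' + y'⊗y + z⊗z' + z'⊗z`. -/
theorem statement12 {F : Type*} [Field F] [IsAlgClosed F]
    {M : Type*} [AddCommGroup M] [Module F M]
    (h2 : (2:F) ≠ 0) (h3 : (3:F) ≠ 0)
    (mul : M →ₗ[F] M →ₗ[F] M) (hMal : IsMalcevMul mul)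
    (h x x' y y' z z' : M) (hstd : IsStdBasis mul h x x' y y' z z')
    (s₁ s₂ s₃ s₄ s₅ s₆ s₇ : M)
    (l : M ⊗[F] M)
    (hl : l = h ⊗ₜ[F] s₁ + x ⊗ₜ[F] s₂ + x' ⊗ₜ[F] s₃ + y ⊗ₜ[F] s₄ + y' ⊗ₜ[F] s₅
      + z ⊗ₜ[F] s₆ + z' ⊗ₜ[F] s₇)
    (hinv : ∀ a : M,
      ((TensorProduct.map (mul.flip a) LinearMap.id
        + TensorProduct.map LinearMap.id (mul.flip a)) : M ⊗[F] M →ₗ[F] M ⊗[F] M) l = 0) :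
    ∃ c : F, l = c • ((2:F)⁻¹ • (h ⊗ₜ[F] h) + x ⊗ₜ[F] x' + x' ⊗ₜ[F] x
      + y ⊗ₜ[F] y' + y' ⊗ₜ[F] y + z ⊗ₜ[F] z' + z' ⊗ₜ[F] z) := by
  classical
  obtain ⟨hli, hsp, anti, hhx, hhy, hhz, hhx', hhy', hhz', hxx', hyy', hzz',
    hxy, hyz, hzx, hx'y', hy'z', hz'x', hxy', hxz', hx'y, hx'z, hyz', hy'z⟩ := hstd
  -- squares vanish
  have sq : ∀ v : M, mul v v = 0 := by
    intro v
    have hv : mul v v + mul v v = 0 := add_eq_zero_iff_eq_neg.mpr (anti v v)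
    have hv2 : (2:F) • mul v v = 0 := by rw [two_smul]; exact hv
    exact (smul_eq_zero.mp hv2).resolve_left h2
  -- flipped products
  have mxh : mul x h = -((2:F) • x) := by rw [anti, hhx]
  have mx'h : mul x' h = (2:F) • x' := by rw [anti, hhx', neg_neg]
  have myh : mul y h = -((2:F) • y) := by rw [anti, hhy]
  have my'h : mul y' h = (2:F) • y' := by rw [anti, hhy', neg_neg]
  have mzh : mul z h = -((2:F) • z) := by rw [anti, hhz]
  have mz'h : mul z' h = (2:F) • z' := by rw [anti, hhz', neg_neg]
  have mx'x : mul x' x = -h := by rw [anti, hxx']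
  have myx : mul y x = -((2:F) • z') := by rw [anti, hxy]
  have my'x : mul y' x = 0 := by rw [anti, hxy', neg_zero]
  have mz'x : mul z' x = 0 := by rw [anti, hxz', neg_zero]
  have my'y : mul y' y = -h := by rw [anti, hyy']
  have mzy : mul z y = -((2:F) • x') := by rw [anti, hyz]
  have mz'y : mul z' y = 0 := by rw [anti, hyz', neg_zero]
  have mxz : mul x z = -((2:F) • y') := by rw [anti, hzx]
  have mz'z : mul z' z = -h := by rw [anti, hzz']
  -- basis
  let B : Basis (Fin 7) F M := Basis.mk hli (le_of_eq hsp.symm)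
  have hB : ∀ j, B j = ![h, x, x', y, y', z, z'] j := fun j => Basis.mk_apply _ _ j
  have hB0 : B 0 = h := (hB 0).trans rfl
  have hB1 : B 1 = x := (hB 1).trans rfl
  have hB2 : B 2 = x' := (hB 2).trans rfl
  have hB3 : B 3 = y := (hB 3).trans rfl
  have hB4 : B 4 = y' := (hB 4).trans rfl
  have hB5 : B 5 = z := (hB 5).trans rfl
  have hB6 : B 6 = z' := (hB 6).trans rfl
  have hrep : ∀ i j, B.repr (![h, x, x', y, y', z, z'] j) i = if j = i then 1 else 0 := by
    intro i j
    rw [← hB j]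
    exact B.repr_self_apply j i
  have r0 : ∀ i, B.repr h i = if (0:Fin 7) = i then 1 else 0 := fun i => hrep i 0
  have r1 : ∀ i, B.repr x i = if (1:Fin 7) = i then 1 else 0 := fun i => hrep i 1
  have r2 : ∀ i, B.repr x' i = if (2:Fin 7) = i then 1 else 0 := fun i => hrep i 2
  have r3 : ∀ i, B.repr y i = if (3:Fin 7) = i then 1 else 0 := fun i => hrep i 3
  have r4 : ∀ i, B.repr y' i = if (4:Fin 7) = i then 1 else 0 := fun i => hrep i 4
  have r5 : ∀ i, B.repr z i = if (5:Fin 7) = i then 1 else 0 := fun i => hrep i 5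
  have r6 : ∀ i, B.repr z' i = if (6:Fin 7) = i then 1 else 0 := fun i => hrep i 6
  -- component equations
  have comp : ∀ (a : M) (i : Fin 7),
      B.repr (mul h a) i • s₁ + B.repr (mul x a) i • s₂ + B.repr (mul x' a) i • s₃
      + B.repr (mul y a) i • s₄ + B.repr (mul y' a) i • s₅ + B.repr (mul z a) i • s₆
      + B.repr (mul z' a) i • s₇
      + B.repr h i • (mul s₁ a) + B.repr x i • (mul s₂ a) + B.repr x' i • (mul s₃ a)
      + B.repr y i • (mul s₄ a) + B.repr y' i • (mul s₅ a) + B.repr z i • (mul s₆ a)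
      + B.repr z' i • (mul s₇ a) = 0 := by
    intro a i
    have E := hinv a
    rw [hl] at E
    have E2 := congrArg (TensorProduct.lift ((LinearMap.lsmul F M) ∘ₗ (B.coord i))) E
    simp only [map_add, LinearMap.add_apply, TensorProduct.map_tmul, LinearMap.flip_apply,
      LinearMap.id_coe, id_eq, TensorProduct.lift.tmul, LinearMap.coe_comp,
      Function.comp_apply, LinearMap.lsmul_apply, Basis.coord_apply, map_zero] at E2
    linear_combination (norm := module) E2
  have Eq1 : mul s₁ h = 0 := by
    have C := comp h 0
    simp only [sq, mxh, mx'h, myh, my'h, mzh, mz'h, r0, r1, r2, r3, r4, r5, r6,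
      map_neg, map_smul, map_zero, Finsupp.coe_neg, Finsupp.coe_smul, Pi.neg_apply,
      Pi.smul_apply, smul_eq_mul] at C
    simp only [Fin.reduceEq, reduceIte, Finsupp.coe_zero, Pi.zero_apply] at C
    linear_combination (norm := module) C
  have Eq2 : s₃ = mul s₁ x := by
    have C := comp x 0
    simp only [sq, hhx, mx'x, myx, my'x, hzx, mz'x, r0, r1, r2, r3, r4, r5, r6,
      map_neg, map_smul, map_zero, Finsupp.coe_neg, Finsupp.coe_smul, Pi.neg_apply,
      Pi.smul_apply, smul_eq_mul] at C
    simp only [Fin.reduceEq, reduceIte, Finsupp.coe_zero, Pi.zero_apply] at C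
    linear_combination (norm := module) -C
  have Eq3 : s₅ = mul s₁ y := by
    have C := comp y 0
    simp only [sq, hhy, hxy, hx'y, my'y, mzy, mz'y, r0, r1, r2, r3, r4, r5, r6,
      map_neg, map_smul, map_zero, Finsupp.coe_neg, Finsupp.coe_smul, Pi.neg_apply,
      Pi.smul_apply, smul_eq_mul] at C
    simp only [Fin.reduceEq, reduceIte, Finsupp.coe_zero, Pi.zero_apply] at C
    linear_combination (norm := module) -C
  have Eq4 : s₇ = mul s₁ z := by
    have C := comp z 0
    simp only [sq, hhz, mxz, hx'z, hyz, hy'z, mz'z, r0, r1, r2, r3, r4, r5, r6,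
      map_neg, map_smul, map_zero, Finsupp.coe_neg, Finsupp.coe_smul, Pi.neg_apply,
      Pi.smul_apply, smul_eq_mul] at C
    simp only [Fin.reduceEq, reduceIte, Finsupp.coe_zero, Pi.zero_apply] at C
    linear_combination (norm := module) -C
  have Eq5 : (2:F) • s₂ + mul s₇ y = 0 := by
    have C := comp y 6
    simp only [sq, hhy, hxy, hx'y, my'y, mzy, mz'y, r0, r1, r2, r3, r4, r5, r6,
      map_neg, map_smul, map_zero, Finsupp.coe_neg, Finsupp.coe_smul, Pi.neg_apply,
      Pi.smul_apply, smul_eq_mul] at C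
    simp only [Fin.reduceEq, reduceIte, Finsupp.coe_zero, Pi.zero_apply] at C
    linear_combination (norm := module) C
  have Eq6 : (2:F) • s₄ + mul s₃ z = 0 := by
    have C := comp z 2
    simp only [sq, hhz, mxz, hx'z, hyz, hy'z, mz'z, r0, r1, r2, r3, r4, r5, r6,
      map_neg, map_smul, map_zero, Finsupp.coe_neg, Finsupp.coe_smul, Pi.neg_apply,
      Pi.smul_apply, smul_eq_mul] at C
    simp only [Fin.reduceEq, reduceIte, Finsupp.coe_zero, Pi.zero_apply] at C
    linear_combination (norm := module) C
  have Eq7 : (2:F) • s₆ + mul s₅ x = 0 := by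
    have C := comp x 4
    simp only [sq, hhx, mx'x, myx, my'x, hzx, mz'x, r0, r1, r2, r3, r4, r5, r6,
      map_neg, map_smul, map_zero, Finsupp.coe_neg, Finsupp.coe_smul, Pi.neg_apply,
      Pi.smul_apply, smul_eq_mul] at C
    simp only [Fin.reduceEq, reduceIte, Finsupp.coe_zero, Pi.zero_apply] at C
    linear_combination (norm := module) C
  -- coordinates of s₁
  set t : Fin 7 → F := fun i => B.repr s₁ i with ht
  have hs1 : s₁ = t 0 • h + t 1 • x + t 2 • x' + t 3 • y + t 4 • y' + t 5 • z + t 6 • z' := by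
    have hsum := B.sum_repr s₁
    rw [Fin.sum_univ_seven, hB0, hB1, hB2, hB3, hB4, hB5, hB6] at hsum
    simp only [ht]
    exact hsum.symm
  have ind : ∀ g : Fin 7 → F, (∑ i, g i • ![h, x, x', y, y', z, z'] i = 0) → ∀ i, g i = 0 :=
    Fintype.linearIndependent_iff.mp hli
  have Eq1' := Eq1
  rw [hs1] at Eq1'
  simp only [map_add, LinearMap.add_apply, map_smul, LinearMap.smul_apply, sq,
    mxh, mx'h, myh, my'h, mzh, mz'h] at Eq1'
  have key1 : ∀ i, (![0, -(2 * t 1), 2 * t 2, -(2 * t 3), 2 * t 4, -(2 * t 5), 2 * t 6] : Fin 7 → F) i = 0 := by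
    apply ind
    rw [Fin.sum_univ_seven]
    show (0:F) • h + (-(2 * t 1)) • x + (2 * t 2) • x' + (-(2 * t 3)) • y
      + (2 * t 4) • y' + (-(2 * t 5)) • z + (2 * t 6) • z' = 0
    linear_combination (norm := module) Eq1'
  have half : ∀ u : F, 2 * u = 0 → u = 0 := fun u hu => (mul_eq_zero.mp hu).resolve_left h2
  have t1z : t 1 = 0 := half _ (neg_eq_zero.mp (show -(2 * t 1) = 0 from key1 1))
  have t2z : t 2 = 0 := half _ (show 2 * t 2 = 0 from key1 2)
  have t3z : t 3 = 0 := half _ (neg_eq_zero.mp (show -(2 * t 3) = 0 from key1 3))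
  have t4z : t 4 = 0 := half _ (show 2 * t 4 = 0 from key1 4)
  have t5z : t 5 = 0 := half _ (neg_eq_zero.mp (show -(2 * t 5) = 0 from key1 5))
  have t6z : t 6 = 0 := half _ (show 2 * t 6 = 0 from key1 6)
  have s1h : s₁ = t 0 • h := by
    rw [hs1, t1z, t2z, t3z, t4z, t5z, t6z]
    simp
  have hs3 : s₃ = (2 * t 0) • x := by
    have C := Eq2
    rw [s1h] at C
    simp only [map_smul, LinearMap.smul_apply, hhx] at C
    linear_combination (norm := module) C
  have hs5 : s₅ = (2 * t 0) • y := by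
    have C := Eq3
    rw [s1h] at C
    simp only [map_smul, LinearMap.smul_apply, hhy] at C
    linear_combination (norm := module) C
  have hs7 : s₇ = (2 * t 0) • z := by
    have C := Eq4
    rw [s1h] at C
    simp only [map_smul, LinearMap.smul_apply, hhz] at C
    linear_combination (norm := module) C
  have hs2 : s₂ = (2 * t 0) • x' := by
    have C := Eq5
    rw [hs7] at C
    simp only [map_smul, LinearMap.smul_apply, mzy] at C
    have C2 : (2:F) • s₂ = (2:F) • ((2 * t 0) • x') := by
      linear_combination (norm := module) C
    exact smul_right_injective M h2 C2
  have hs4 : s₄ = (2 * t 0) • y' := by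
    have C := Eq6
    rw [hs3] at C
    simp only [map_smul, LinearMap.smul_apply, mxz] at C
    have C2 : (2:F) • s₄ = (2:F) • ((2 * t 0) • y') := by
      linear_combination (norm := module) C
    exact smul_right_injective M h2 C2
  have hs6 : s₆ = (2 * t 0) • z' := by
    have C := Eq7
    rw [hs5] at C
    simp only [map_smul, LinearMap.smul_apply, myx] at C
    have C2 : (2:F) • s₆ = (2:F) • ((2 * t 0) • z') := by
      linear_combination (norm := module) C
    exact smul_right_injective M h2 C2
  refine ⟨2 * t 0, ?_⟩
  have h2' : (2:F) * 2⁻¹ = 1 := mul_inv_cancel₀ h2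
  rw [hl, s1h, hs2, hs3, hs4, hs5, hs6, hs7]
  simp only [TensorProduct.tmul_smul]
  match_scalars
  · linear_combination (t 0) * h2'.symm
  all_goals ring


end MalcevPaper
end

section
/- Let 𝕄 be the 7-dimensional simple non-Lie Malcev algebra with standard basis h,x,x',y,y',z,z', and let α_12, α_15, α_16, α_25, α_56 ∈ F. Then the element r_0 = α_12(h⊗x − x⊗h) + α_15(h⊗y' − y'⊗h) + α_16(h⊗z − z⊗h) + α_25(x⊗y' − y'⊗x) − 2α_15(x⊗z − z⊗x) + α_56(y'⊗z − z⊗y') is a solution of the classical Yang–Baxter equation on 𝕄, i.e. C_𝕄(r_0) = 0. -/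
open TensorProduct Module

namespace MalcevPaper

variable {F : Type*} [Field F] {M : Type*} [AddCommGroup M] [Module F M]

lemma cybT1_tmul' (mul : M →ₗ[F] M →ₗ[F] M) (a b c d : M) :
    cybT1 mul ((a ⊗ₜ[F] b) ⊗ₜ[F] (c ⊗ₜ[F] d)) = mul a c ⊗ₜ[F] (b ⊗ₜ[F] d) := by
  simp [cybT1, tensorTensorTensorComm_tmul]

lemma cybT2_tmul' (mul : M →ₗ[F] M →ₗ[F] M) (a b c d : M) :
    cybT2 mul ((a ⊗ₜ[F] b) ⊗ₜ[F] (c ⊗ₜ[F] d)) = a ⊗ₜ[F] (mul c b ⊗ₜ[F] d) := by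
  simp [cybT2, tensorTensorTensorComm_tmul, leftComm_tmul]

lemma cybT3_tmul' (mul : M →ₗ[F] M →ₗ[F] M) (a b c d : M) :
    cybT3 mul ((a ⊗ₜ[F] b) ⊗ₜ[F] (c ⊗ₜ[F] d)) = a ⊗ₜ[F] (c ⊗ₜ[F] mul b d) := by
  simp [cybT3, tensorTensorTensorComm_tmul, assoc_tmul]

set_option maxHeartbeats 2000000

/-- Theorem 5 (first part): the element `r₀` is a solution of the classical
Yang–Baxter equation on `𝕄`. -/
theorem statement15 {F : Type*} [Field F] [IsAlgClosed F]
    {M : Type*} [AddCommGroup M] [Module F M]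
    (h2 : (2:F) ≠ 0) (h3 : (3:F) ≠ 0)
    (mul : M →ₗ[F] M →ₗ[F] M) (hMal : IsMalcevMul mul)
    (h x x' y y' z z' : M) (hstd : IsStdBasis mul h x x' y y' z z')
    (α₁₂ α₁₅ α₁₆ α₂₅ α₅₆ : F) :
    cyb mul
      (α₁₂ • (h ⊗ₜ[F] x - x ⊗ₜ[F] h) + α₁₅ • (h ⊗ₜ[F] y' - y' ⊗ₜ[F] h)
        + α₁₆ • (h ⊗ₜ[F] z - z ⊗ₜ[F] h) + α₂₅ • (x ⊗ₜ[F] y' - y' ⊗ₜ[F] x)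
        - ((2:F) * α₁₅) • (x ⊗ₜ[F] z - z ⊗ₜ[F] x)
        + α₅₆ • (y' ⊗ₜ[F] z - z ⊗ₜ[F] y')) = 0 := by
  have hself : ∀ u : M, mul u u = 0 := by
    intro u
    have hu := hstd.anti u u
    have h2u : (2:F) • mul u u = 0 := by
      rw [two_smul]; nth_rewrite 2 [hu]; simp
    rcases smul_eq_zero.mp h2u with hc | hc
    · exact absurd hc h2
    · exact hc
  have hxh : mul x h = -((2:F) • x) := by rw [hstd.anti, hstd.mul_h_x]
  have hy'h : mul y' h = (2:F) • y' := by rw [hstd.anti, hstd.mul_h_y']; simp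
  have hzh : mul z h = -((2:F) • z) := by rw [hstd.anti, hstd.mul_h_z]
  have hxz : mul x z = -((2:F) • y') := by rw [hstd.anti, hstd.mul_z_x]
  have hy'x : mul y' x = 0 := by rw [hstd.anti, hstd.mul_x_y']; simp
  have hzy' : mul z y' = 0 := by rw [hstd.anti, hstd.mul_y'_z]; simp
  simp only [cyb, smul_sub, tmul_add, add_tmul, tmul_sub, sub_tmul, ← smul_tmul',
    tmul_smul, map_add, map_sub, map_smul, cybT1_tmul', cybT2_tmul', cybT3_tmul',
    hself, hstd.mul_h_x, hstd.mul_h_y', hstd.mul_h_z, hstd.mul_x_y', hstd.mul_z_x,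
    hstd.mul_y'_z, hxh, hy'h, hzh, hxz, hy'x, hzy',
    zero_tmul, tmul_zero, neg_tmul, tmul_neg, smul_neg, smul_zero]
  module

end MalcevPaper
end
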